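/- arXiv:2308.04609 — 5 statements merged into one kernel-verified Lean document; each statement's English description precedes it below -/
import Mathlib

section
/- For every integer k ≥ 2, if (X, d) is a pseudo k-metric space and (X′, d′) is its apex extension with apex a ∉ X, then (X′, d′) is a strong pseudo (k+1)-metric space if and only if (X, d) is a strong pseudo k-metric space. -/
open scoped BigOperators

/-- An alternating real-valued function on `j`-tuples of `X`
(a `(j-1)`-dimensional chain on the complete complex on `X`). -/
def AltChain {X : Type*} {j : ℕ} (α : (Fin j → X) → ℝ) : Prop :=
  ∀ (π : Equiv.Perm (Fin j)) (x : Fin j → X),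
    α (x ∘ π) = ((Equiv.Perm.sign π : ℤ) : ℝ) * α x

/-- The boundary operator: `(∂α)(y₁,…,y_j) = ∑_{x ∈ X} α(x, y₁, …, y_j)`. -/
noncomputable def bdry {X : Type*} [Fintype X] {j : ℕ}
    (α : (Fin (j + 1) → X) → ℝ) : (Fin j → X) → ℝ :=
  fun y => ∑ x : X, α (Fin.cons x y)

/-- The elementary chain `1_t`: value `sign π` on the reordering of `t` by `π`,
and `0` on all other tuples. -/
noncomputable def unitChain {X : Type*} [DecidableEq X] {j : ℕ} (t : Fin j → X) :
    (Fin j → X) → ℝ :=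
  fun s => ∑ π : Equiv.Perm (Fin j),
    if s = t ∘ π then ((Equiv.Perm.sign π : ℤ) : ℝ) else 0

/-- The coboundary operator:
`(δf)(x₁,…,x_{j+2}) = ∑ᵢ (-1)^(i+1) f(x₁,…,x̂ᵢ,…,x_{j+2})` (`0`-indexed sign `(-1)^i`). -/
noncomputable def cobdry {X : Type*} {j : ℕ}
    (f : (Fin (j + 1) → X) → ℝ) : (Fin (j + 2) → X) → ℝ :=
  fun x => ∑ i : Fin (j + 2), (-1 : ℝ) ^ (i : ℕ) * f (x ∘ i.succAbove)

/-- A pseudo metric of arity `K` (a pseudo `K`-metric): nonnegative, vanishing on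
non-injective tuples, permutation invariant, satisfying the simplex inequality. -/
structure IsPseudoMetric {X : Type*} (K : ℕ) (d : (Fin K → X) → ℝ) : Prop where
  nonneg : ∀ x, 0 ≤ d x
  eq_zero : ∀ x, ¬ Function.Injective x → d x = 0
  perm : ∀ (π : Equiv.Perm (Fin K)) (x), d (x ∘ π) = d x
  simplex : ∀ (x : Fin K → X) (y : X),
    d x ≤ ∑ i : Fin K, d (Function.update x i y)

/-- A strong pseudo metric of arity `k + 1` (a strong pseudo `(k+1)`-metric).
The strong simplex inequality `d t ≤ ∑_τ |α(τ)| * d(τ)` (with the sum over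
`(k+1)`-element subsets `τ` of `X`, each evaluated on any fixed ordering of `τ`)
is stated in the equivalent form `(k+1)! * d t ≤ ∑_s |α(s)| * d(s)` with the sum
over all `(k+1)`-tuples `s`: since `α` is alternating and `d` is permutation
invariant, the summand depends only on the underlying set of `s` (it vanishes on
tuples with repeated entries), and each `(k+1)`-element subset has exactly
`(k+1)!` orderings. -/
structure IsStrongPseudoMetric {X : Type*} [Fintype X] [DecidableEq X] (k : ℕ)
    (d : (Fin (k + 1) → X) → ℝ) : Prop where
  nonneg : ∀ x, 0 ≤ d x
  eq_zero : ∀ x, ¬ Function.Injective x → d x = 0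
  perm : ∀ (π : Equiv.Perm (Fin (k + 1))) (x), d (x ∘ π) = d x
  strong_simplex : ∀ t : Fin (k + 1) → X, Function.Injective t →
    ∀ α : (Fin (k + 1) → X) → ℝ, AltChain α → bdry α = bdry (unitChain t) →
      ((k + 1).factorial : ℝ) * d t ≤ ∑ s : Fin (k + 1) → X, |α s| * d s

/-- `(X, d)` is a coboundary metric of arity `k + 2` in `m` dimensions with respect
to the norm `ν` on `ℝ^m`: there are chains `f 1, …, f m` on `(k+1)`-tuples (i.e.
`(k+2)-2`-dimensional chains for arity `k+2`) whose simultaneous coboundary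
realizes `d` on injective tuples, and `d` vanishes on non-injective tuples. -/
def IsCoboundaryMetric {X : Type*} (k m : ℕ) (ν : (Fin m → ℝ) → ℝ)
    (d : (Fin (k + 2) → X) → ℝ) : Prop :=
  ∃ f : Fin m → ((Fin (k + 1) → X) → ℝ),
    (∀ i, AltChain (f i)) ∧
    (∀ x, Function.Injective x → d x = ν (fun i => cobdry (f i) x)) ∧
    (∀ x, ¬ Function.Injective x → d x = 0)

/-- `ν` is a norm on `ℝ^m`. -/
structure IsNorm {m : ℕ} (ν : (Fin m → ℝ) → ℝ) : Prop where
  nonneg : ∀ x, 0 ≤ ν x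
  eq_zero_iff : ∀ x, ν x = 0 ↔ x = 0
  homog : ∀ (c : ℝ) (x), ν (c • x) = |c| * ν x
  triangle : ∀ x y, ν (x + y) ≤ ν x + ν y

/-- The `ℓ_p` norm on `ℝ^m` for real `p`. -/
noncomputable def lpNorm (p : ℝ) {m : ℕ} (x : Fin m → ℝ) : ℝ :=
  (∑ i, |x i| ^ p) ^ (1 / p)

/-- The `ℓ_1` norm on `ℝ^m`. -/
noncomputable def l1Norm {m : ℕ} (x : Fin m → ℝ) : ℝ := ∑ i, |x i|

/-- The `ℓ_2` (Euclidean) norm on `ℝ^m`. -/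
noncomputable def l2Norm {m : ℕ} (x : Fin m → ℝ) : ℝ := Real.sqrt (∑ i, x i ^ 2)

/-- The `ℓ_∞` norm on `ℝ^m` (the sup norm, which is the norm of `Fin m → ℝ`). -/
noncomputable def linfNorm {m : ℕ} (x : Fin m → ℝ) : ℝ := ‖x‖

/- The apex extension of `d` (of arity `K`), with the apex being
`none : Option X` (a new element not in `X`): on an injective `(K+1)`-tuple
containing the apex in position `i` it is `d` of the tuple with position `i`
removed, and it is `0` on all other tuples. -/
open Classical in
noncomputable def apexExt {X : Type*} {K : ℕ} (d : (Fin K → X) → ℝ) :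
    (Fin (K + 1) → Option X) → ℝ := fun x =>
  if h : Function.Injective x ∧ ∃ i, x i = none then
    d (fun j =>
      Option.get (x ((Classical.choose h.2).succAbove j))
        (by
          rw [Option.isSome_iff_ne_none]
          intro hnone
          exact Fin.succAbove_ne (Classical.choose h.2) j
            (h.1 (hnone.trans (Classical.choose_spec h.2).symm))))
  else 0

/-- The `K`-dimensional volume of the simplex with vertices `y 0, …, y K` in `ℝ^m`:
`(1/K!) * √(det (AᵀA))` where `A` is the `m × K` matrix with columns
`y i - y 0`, `i = 1, …, K`. -/
noncomputable def simplexVolume {m K : ℕ} (y : Fin (K + 1) → (Fin m → ℝ)) : ℝ :=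
  (1 / (K.factorial : ℝ)) *
    Real.sqrt
      (Matrix.det
        (Matrix.of fun i j : Fin K =>
          ∑ l : Fin m, (y i.succ l - y 0 l) * (y j.succ l - y 0 l)))



section Chunk1

variable {X Y Z : Type*}

noncomputable def sgn {n : ℕ} (π : Equiv.Perm (Fin n)) : ℝ := ((Equiv.Perm.sign π : ℤ) : ℝ)

lemma sgn_def {n : ℕ} (π : Equiv.Perm (Fin n)) : sgn π = ((Equiv.Perm.sign π : ℤ) : ℝ) := rfl

lemma sgn_mul {n : ℕ} (π σ : Equiv.Perm (Fin n)) : sgn (π * σ) = sgn π * sgn σ := by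
  simp [sgn]

lemma sgn_one_or {n : ℕ} (π : Equiv.Perm (Fin n)) : sgn π = 1 ∨ sgn π = -1 := by
  rcases Int.units_eq_one_or (Equiv.Perm.sign π) with h | h <;> simp [sgn, h]

lemma sgn_mul_self {n : ℕ} (π : Equiv.Perm (Fin n)) : sgn π * sgn π = 1 := by
  rcases sgn_one_or π with h | h <;> rw [h] <;> norm_num

lemma abs_sgn {n : ℕ} (π : Equiv.Perm (Fin n)) : |sgn π| = 1 := by
  rcases sgn_one_or π with h | h <;> rw [h] <;> norm_num

lemma sgn_symm {n : ℕ} (π : Equiv.Perm (Fin n)) : sgn π.symm = sgn π := by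
  have : π.symm = π⁻¹ := rfl
  rw [this, sgn, Equiv.Perm.sign_inv, sgn]

lemma sgn_swap {n : ℕ} {a b : Fin n} (h : a ≠ b) : sgn (Equiv.swap a b) = -1 := by
  rw [sgn, Equiv.Perm.sign_swap h]; norm_num

lemma sgn_cycleRange {n : ℕ} (i : Fin (n + 1)) :
    sgn (Fin.cycleRange i) = (-1 : ℝ) ^ (i : ℕ) := by
  rw [sgn, Fin.sign_cycleRange]; push_cast; ring

lemma sgn_cycleRange_symm {n : ℕ} (i : Fin (n + 1)) :
    sgn (Fin.cycleRange i).symm = (-1 : ℝ) ^ (i : ℕ) := by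
  rw [sgn_symm, sgn_cycleRange]

lemma sgn_decompose0 {n : ℕ} (σ : Equiv.Perm (Fin n)) :
    sgn (Equiv.Perm.decomposeFin.symm (0, σ)) = sgn σ := by
  rw [sgn, Equiv.Perm.decomposeFin.symm_sign, if_pos rfl, one_mul, sgn]

end Chunk1
section Chunk2

open Function Finset Equiv

variable {X Y Z : Type*}

lemma AltChain.sgn_apply {n : ℕ} {α : (Fin n → Y) → ℝ} (h : AltChain α)
    (π : Equiv.Perm (Fin n)) (x : Fin n → Y) : α (x ∘ π) = sgn π * α x := h π x

lemma eq_comp_symm_iff {n : ℕ} {f g : Fin n → Y} (π : Equiv.Perm (Fin n)) :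
    f = g ∘ ⇑π⁻¹ ↔ f ∘ ⇑π = g := by
  constructor
  · rintro rfl; funext m; simp
  · rintro rfl; funext m; simp

lemma AltChain.eq_zero_of_not_injective {n : ℕ} {α : (Fin n → Y) → ℝ} (h : AltChain α)
    {x : Fin n → Y} (hx : ¬ Function.Injective x) : α x = 0 := by
  rw [Function.Injective] at hx
  push_neg at hx
  obtain ⟨a, b, hab, hne⟩ := hx
  have hswap : x ∘ ⇑(Equiv.swap a b) = x := by
    funext m
    by_cases h1 : m = a
    · simp [h1, Equiv.swap_apply_left, hab.symm]
    · by_cases h2 : m = b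
      · simp [h2, Equiv.swap_apply_right, hab]
      · simp [Equiv.swap_apply_of_ne_of_ne h1 h2]
  have := h.sgn_apply (Equiv.swap a b) x
  rw [hswap, sgn_swap hne] at this
  linarith

lemma altChain_unitChain {n : ℕ} [DecidableEq Y] (t : Fin n → Y) : AltChain (unitChain t) := by
  intro π x
  rw [← sgn_def, unitChain, unitChain, Finset.mul_sum]
  refine Fintype.sum_equiv (Equiv.mulRight π⁻¹) _ _ ?_
  intro ρ
  have hco : t ∘ ⇑(ρ * π⁻¹) = (t ∘ ⇑ρ) ∘ ⇑π⁻¹ := rfl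
  simp only [Equiv.coe_mulRight, hco]
  rw [if_congr (eq_comp_symm_iff π (g := t ∘ ⇑ρ)) rfl rfl]
  by_cases hc : x ∘ ⇑π = t ∘ ⇑ρ
  · rw [if_pos hc, if_pos hc, ← sgn_def, ← sgn_def, sgn_mul]
    have h1 : sgn π⁻¹ = sgn π := by rw [sgn, Equiv.Perm.sign_inv, sgn]
    rw [h1, ← mul_assoc, mul_comm (sgn π) (sgn ρ), mul_assoc, sgn_mul_self, mul_one]
  · rw [if_neg hc, if_neg hc, mul_zero]

lemma unitChain_comp_perm {n : ℕ} [DecidableEq Y] (t : Fin n → Y) (π : Equiv.Perm (Fin n))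
    (s : Fin n → Y) : unitChain (t ∘ ⇑π) s = sgn π * unitChain t s := by
  rw [unitChain, unitChain, Finset.mul_sum]
  refine Fintype.sum_equiv (Equiv.mulLeft π) _ _ ?_
  intro ρ
  have hco : t ∘ ⇑(π * ρ) = (t ∘ ⇑π) ∘ ⇑ρ := rfl
  simp only [Equiv.coe_mulLeft, hco]
  by_cases hc : s = (t ∘ ⇑π) ∘ ⇑ρ
  · rw [if_pos hc, if_pos hc, ← sgn_def, ← sgn_def, sgn_mul, ← mul_assoc, sgn_mul_self, one_mul]
  · rw [if_neg hc, if_neg hc, mul_zero]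

lemma unitChain_eq_zero_of_not_injective {n : ℕ} [DecidableEq Y] {t : Fin n → Y}
    (ht : Function.Injective t) {s : Fin n → Y} (hs : ¬ Function.Injective s) :
    unitChain t s = 0 := by
  rw [unitChain]
  apply Finset.sum_eq_zero
  intro π _
  rw [if_neg]
  rintro rfl
  exact hs (ht.comp π.injective)

lemma unitChain_eq_zero_of_forall_ne {n : ℕ} [DecidableEq Y] {t : Fin n → Y}
    {s : Fin n → Y} (hs : ∀ π : Equiv.Perm (Fin n), s ≠ t ∘ ⇑π) :
    unitChain t s = 0 := by
  rw [unitChain]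
  exact Finset.sum_eq_zero fun π _ => if_neg (hs π)

lemma unitChain_comp_left {n : ℕ} [DecidableEq Y] [DecidableEq Z] {g : Y → Z}
    (hg : Function.Injective g) (v w : Fin n → Y) :
    unitChain (g ∘ v) (g ∘ w) = unitChain v w := by
  rw [unitChain, unitChain]
  refine Finset.sum_congr rfl fun π _ => ?_
  congr 1
  apply propext
  constructor
  · intro h
    funext m
    exact hg (congrFun h m)
  · rintro rfl; rfl

end Chunk2
section Chunk3

open Function Finset Equiv

variable {X Y Z : Type*}

lemma cons_comp_decompose {n : ℕ} (a : Y) (v : Fin n → Y) (σ : Equiv.Perm (Fin n)) :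
    Fin.cons a v ∘ ⇑(Equiv.Perm.decomposeFin.symm (0, σ)) = Fin.cons a (v ∘ ⇑σ) := by
  funext m
  induction m using Fin.cases with
  | zero => simp
  | succ j => simp [Equiv.Perm.decomposeFin_symm_apply_succ, Equiv.swap_self]

lemma unitChain_cons {n : ℕ} [DecidableEq Y] (a : Y) {v : Fin n → Y} (hv : ∀ j, v j ≠ a)
    (w : Fin n → Y) :
    unitChain (Fin.cons a v) (Fin.cons a w) = unitChain v w := by
  rw [unitChain, unitChain]
  rw [← Equiv.sum_comp (Equiv.Perm.decomposeFin.symm)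
    (fun π => if (Fin.cons a w : Fin (n+1) → Y) = Fin.cons a v ∘ ⇑π
      then ((Equiv.Perm.sign π : ℤ) : ℝ) else 0)]
  rw [Fintype.sum_prod_type]
  rw [Finset.sum_eq_single (0 : Fin (n + 1))]
  · refine Finset.sum_congr rfl fun σ _ => ?_
    rw [cons_comp_decompose]
    have hiff : ((Fin.cons a w : Fin (n+1) → Y) = Fin.cons a (v ∘ ⇑σ)) ↔ (w = v ∘ ⇑σ) := by
      constructor
      · intro h
        funext m
        have := congrFun h m.succ
        simpa using this
      · rintro rfl; rfl
    rw [if_congr hiff rfl rfl]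
    by_cases hc : w = v ∘ ⇑σ
    · rw [if_pos hc, if_pos hc, ← sgn_def, ← sgn_def, sgn_decompose0]
    · rw [if_neg hc, if_neg hc]
  · intro p _ hp
    apply Finset.sum_eq_zero
    intro σ _
    rw [if_neg]
    intro h
    have h0 := congrFun h 0
    simp only [Function.comp_apply, Equiv.Perm.decomposeFin_symm_apply_zero, Fin.cons_zero] at h0
    rcases Fin.eq_zero_or_eq_succ p with rfl | ⟨j, rfl⟩
    · exact hp rfl
    · rw [Fin.cons_succ] at h0
      exact hv j h0.symm
  · intro h; exact absurd (Finset.mem_univ _) h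

lemma comp_cons' {n : ℕ} (g : Y → Z) (w : Y) (v : Fin n → Y) :
    g ∘ Fin.cons w v = Fin.cons (g w) (g ∘ v) := by
  funext m
  induction m using Fin.cases with
  | zero => simp
  | succ j => simp

lemma cons_cons_swap {n : ℕ} (a b : Y) (v : Fin n → Y) :
    (Fin.cons a (Fin.cons b v) : Fin (n + 2) → Y) =
      Fin.cons b (Fin.cons a v) ∘ ⇑(Equiv.swap (0 : Fin (n + 2)) 1) := by
  funext m
  induction m using Fin.cases with
  | zero =>
    rw [Function.comp_apply, Equiv.swap_apply_left, Fin.cons_zero, ← Fin.succ_zero_eq_one,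
      Fin.cons_succ, Fin.cons_zero]
  | succ j =>
    induction j using Fin.cases with
    | zero =>
      rw [Function.comp_apply, Fin.succ_zero_eq_one, Equiv.swap_apply_right, Fin.cons_zero,
        ← Fin.succ_zero_eq_one, Fin.cons_succ, Fin.cons_zero]
    | succ m' =>
      rw [Function.comp_apply, Equiv.swap_apply_of_ne_of_ne (Fin.succ_ne_zero _)
        (by rw [← Fin.succ_zero_eq_one]; intro h; exact Fin.succ_ne_zero _ (Fin.succ_injective _ h)),
        Fin.cons_succ, Fin.cons_succ, Fin.cons_succ, Fin.cons_succ]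

lemma cons_injective {n : ℕ} {a : Y} {v : Fin n → Y} (ha : ∀ j, v j ≠ a)
    (hv : Function.Injective v) : Function.Injective (Fin.cons a v : Fin (n+1) → Y) := by
  intro m m' h
  induction m using Fin.cases with
  | zero =>
    induction m' using Fin.cases with
    | zero => rfl
    | succ j => rw [Fin.cons_zero, Fin.cons_succ] at h; exact absurd h.symm (ha j)
  | succ j =>
    induction m' using Fin.cases with
    | zero => rw [Fin.cons_zero, Fin.cons_succ] at h; exact absurd h (ha j)
    | succ j' => rw [Fin.cons_succ, Fin.cons_succ] at h; rw [hv h]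

lemma key_succAbove {n : ℕ} (π : Equiv.Perm (Fin (n + 1))) (i : Fin (n + 1)) :
    ∃ τ : Equiv.Perm (Fin n), (∀ j, π (i.succAbove j) = (π i).succAbove (τ j)) ∧
      sgn π * (-1 : ℝ) ^ ((π i : Fin (n+1)) : ℕ) = (-1 : ℝ) ^ (i : ℕ) * sgn τ := by
  set μ : Equiv.Perm (Fin (n + 1)) := Fin.cycleRange (π i) * π * (Fin.cycleRange i)⁻¹ with hμ
  have hμ0 : μ 0 = 0 := by
    have h1 : (Fin.cycleRange i)⁻¹ (0 : Fin (n+1)) = i := Fin.cycleRange_symm_zero i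
    simp only [hμ, Equiv.Perm.coe_mul, Function.comp_apply, h1]
    exact Fin.cycleRange_self (π i)
  obtain ⟨⟨p, τ⟩, hpτ⟩ := Equiv.Perm.decomposeFin.symm.surjective μ
  have hp : p = 0 := by
    have := congrFun (congrArg (fun (e : Equiv.Perm (Fin (n+1))) => (e : Fin (n+1) → Fin (n+1))) hpτ) 0
    simp only [Equiv.Perm.decomposeFin_symm_apply_zero] at this
    rw [this, hμ0]
  subst hp
  refine ⟨τ, ?_, ?_⟩
  · intro j
    have happ : μ j.succ = (τ j).succ := by
      rw [← hpτ, Equiv.Perm.decomposeFin_symm_apply_succ, Equiv.swap_self]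
      rfl
    have h2 : (Fin.cycleRange i)⁻¹ j.succ = i.succAbove j := Fin.cycleRange_symm_succ i j
    simp only [hμ, Equiv.Perm.coe_mul, Function.comp_apply, h2] at happ
    have := congrArg (Fin.cycleRange (π i)).symm happ
    rw [Equiv.symm_apply_apply] at this
    rw [this, Fin.cycleRange_symm_succ]
  · have hsgnμ : sgn μ = sgn τ := by rw [← hpτ, sgn_decompose0]
    have hexp : sgn μ = (-1 : ℝ) ^ ((π i : Fin (n+1)) : ℕ) * sgn π * (-1 : ℝ) ^ (i : ℕ) := by
      rw [hμ, sgn_mul, sgn_mul, sgn_cycleRange]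
      have : sgn (Fin.cycleRange i)⁻¹ = (-1 : ℝ) ^ (i : ℕ) := by
        rw [show (Fin.cycleRange i)⁻¹ = (Fin.cycleRange i).symm from rfl, sgn_cycleRange_symm]
      rw [this, mul_assoc]
    have h4 : (-1 : ℝ) ^ (i : ℕ) * ((-1 : ℝ) ^ (i : ℕ)) = 1 := by
      rw [← mul_pow]; norm_num
    rw [← hsgnμ, hexp]
    linear_combination (-((-1 : ℝ) ^ ((π i : Fin (n+1)) : ℕ) * sgn π)) * h4

end Chunk3
section Chunk4

open Function Finset Equiv

variable {X Y Z : Type*}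

noncomputable def coneAt {n : ℕ} [DecidableEq Y] (a : Y) (g : (Fin n → Y) → ℝ) : (Fin (n + 1) → Y) → ℝ :=
  fun s => ∑ i : Fin (n + 1), if s i = a then (-1 : ℝ) ^ (i : ℕ) * g (s ∘ i.succAbove) else 0

lemma altChain_coneAt {n : ℕ} [DecidableEq Y] (a : Y) {g : (Fin n → Y) → ℝ} (hg : AltChain g) :
    AltChain (coneAt a g) := by
  intro π x
  rw [← sgn_def, coneAt, coneAt, Finset.mul_sum]
  have hterm : ∀ i : Fin (n + 1),
      (if (x ∘ ⇑π) i = a then (-1 : ℝ) ^ (i : ℕ) * g ((x ∘ ⇑π) ∘ i.succAbove) else 0)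
        = sgn π * (if x (π i) = a then (-1 : ℝ) ^ ((π i : Fin (n+1)) : ℕ)
            * g (x ∘ (π i).succAbove) else 0) := by
    intro i
    obtain ⟨τ, hτ1, hτ2⟩ := key_succAbove π i
    simp only [Function.comp_apply]
    by_cases hc : x (π i) = a
    · rw [if_pos hc, if_pos hc]
      have harg : (x ∘ ⇑π) ∘ i.succAbove = (x ∘ (π i).succAbove) ∘ ⇑τ := by
        funext j
        exact congrArg x (hτ1 j)
      rw [harg, hg.sgn_apply τ]
      linear_combination (-(g (x ∘ (π i).succAbove))) * hτ2
    · rw [if_neg hc, if_neg hc, mul_zero]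
  rw [Finset.sum_congr rfl fun i _ => hterm i]
  exact Equiv.sum_comp π (fun m => sgn π * if x m = a then (-1 : ℝ) ^ ((m : Fin (n+1)) : ℕ)
    * g (x ∘ m.succAbove) else 0)

lemma cons_comp_succ {n : ℕ} (w : Y) (z : Fin n → Y) :
    (Fin.cons w z : Fin (n+1) → Y) ∘ Fin.succ = z := by
  funext m; simp

lemma cons_comp_succAbove_succ {n : ℕ} (w : Y) (z : Fin (n + 1) → Y) (j : Fin (n + 1)) :
    (Fin.cons w z : Fin (n+2) → Y) ∘ (j.succ).succAbove = Fin.cons w (z ∘ j.succAbove) := by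
  funext m
  induction m using Fin.cases with
  | zero => rw [Function.comp_apply, Fin.succ_succAbove_zero, Fin.cons_zero, Fin.cons_zero]
  | succ j' => rw [Function.comp_apply, Fin.succ_succAbove_succ, Fin.cons_succ, Fin.cons_succ]; rfl

lemma bdry_coneAt [Fintype Y] [DecidableEq Y] {n : ℕ} (a : Y) (g : (Fin (n + 1) → Y) → ℝ) :
    bdry (coneAt a g) = fun z => g z - coneAt a (bdry g) z := by
  funext z
  rw [bdry]
  simp only [coneAt]
  rw [Finset.sum_comm, Fin.sum_univ_succ]
  have h0 : (∑ w : Y, if (Fin.cons w z : Fin (n+2) → Y) 0 = a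
      then (-1 : ℝ) ^ (((0 : Fin (n+2))) : ℕ) * g (Fin.cons w z ∘ (0 : Fin (n+2)).succAbove)
      else 0) = g z := by
    have harg : ∀ w : Y, (Fin.cons w z : Fin (n+2) → Y) ∘ (0 : Fin (n+2)).succAbove = z := by
      intro w
      funext m
      rw [Function.comp_apply, Fin.zero_succAbove, Fin.cons_succ]
    have : ∀ w : Y, (if (Fin.cons w z : Fin (n+2) → Y) 0 = a
        then (-1 : ℝ) ^ (((0 : Fin (n+2))) : ℕ) * g (Fin.cons w z ∘ (0 : Fin (n+2)).succAbove)
        else 0) = if w = a then g z else 0 := by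
      intro w
      rw [harg w, Fin.cons_zero]
      simp
    rw [Finset.sum_congr rfl fun w _ => this w, Finset.sum_ite_eq' Finset.univ a fun _ => g z,
      if_pos (Finset.mem_univ a)]
  have hsucc : (∑ i : Fin (n + 1), ∑ w : Y, if (Fin.cons w z : Fin (n+2) → Y) i.succ = a
      then (-1 : ℝ) ^ ((i.succ : Fin (n+2)) : ℕ) * g (Fin.cons w z ∘ (i.succ).succAbove)
      else 0) = - coneAt a (bdry g) z := by
    rw [coneAt, ← Finset.sum_neg_distrib]
    refine Finset.sum_congr rfl fun i _ => ?_
    by_cases hc : z i = a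
    · simp only [Fin.cons_succ, if_pos hc, cons_comp_succAbove_succ, Fin.val_succ]
      rw [← Finset.mul_sum, bdry]
      ring
    · simp only [Fin.cons_succ, if_neg hc, Finset.sum_const_zero, neg_zero]
  rw [h0, hsucc, coneAt]
  ring

end Chunk4
section Chunk5

open Function Finset Equiv

variable {X Y Z : Type*}

noncomputable def optC {n : ℕ} (g : (Fin n → X) → ℝ) : (Fin n → Option X) → ℝ :=
  fun v => if h : ∀ m, (v m).isSome then g (fun m => (v m).get (h m)) else 0

lemma optC_some {n : ℕ} (g : (Fin n → X) → ℝ) (z : Fin n → X) :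
    optC g (some ∘ z) = g z := by
  rw [optC, dif_pos]
  · congr 1
  · intro m; rfl

lemma optC_none {n : ℕ} (g : (Fin n → X) → ℝ) (v : Fin n → Option X) (m : Fin n)
    (hm : v m = none) : optC g v = 0 := by
  rw [optC, dif_neg]
  intro h
  have := h m
  rw [hm] at this
  exact (Bool.false_ne_true this)

lemma altChain_optC {n : ℕ} {g : (Fin n → X) → ℝ} (hg : AltChain g) :
    AltChain (optC g) := by
  intro π x
  rw [← sgn_def]
  by_cases h : ∀ m, (x m).isSome
  · have h' : ∀ m, ((x ∘ ⇑π) m).isSome := fun m => h (π m)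
    rw [optC, optC, dif_pos h', dif_pos h]
    have harg : (fun m => ((x ∘ ⇑π) m).get (h' m)) = (fun m => (x m).get (h m)) ∘ ⇑π := rfl
    rw [harg]
    exact hg.sgn_apply π _
  · push_neg at h
    obtain ⟨m, hm⟩ := h
    have hm' : x m = none := Option.not_isSome_iff_eq_none.mp hm
    rw [optC_none g x m hm', optC_none g (x ∘ ⇑π) (π.symm m) (by simp [hm']), mul_zero]

lemma optC_sub {n : ℕ} (f g : (Fin n → X) → ℝ) (v : Fin n → Option X) :
    optC (fun z => f z - g z) v = optC f v - optC g v := by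
  rw [optC, optC, optC]
  by_cases h : ∀ m, (v m).isSome
  · rw [dif_pos h, dif_pos h, dif_pos h]
  · rw [dif_neg h, dif_neg h, dif_neg h, sub_zero]

lemma bdry_optC [Fintype X] {n : ℕ} (g : (Fin (n + 1) → X) → ℝ) :
    bdry (optC g) = optC (bdry g) := by
  funext y
  rw [bdry, Fintype.sum_option]
  rw [optC_none g _ 0 (Fin.cons_zero _ _)]
  rw [zero_add]
  by_cases hy : ∀ m, (y m).isSome
  · have hterm : ∀ w : X, optC g (Fin.cons (some w) y) =
        g (Fin.cons w (fun m => (y m).get (hy m))) := by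
      intro w
      have h' : ∀ m, ((Fin.cons (some w) y : Fin (n+1) → Option X) m).isSome := by
        intro m
        induction m using Fin.cases with
        | zero => rfl
        | succ j => rw [Fin.cons_succ]; exact hy j
      rw [optC, dif_pos h']
      congr 1
      funext m
      induction m using Fin.cases with
      | zero => simp
      | succ j => simp
    rw [Finset.sum_congr rfl fun w _ => hterm w]
    rw [optC, dif_pos hy, bdry]
  · push_neg at hy
    obtain ⟨m, hm⟩ := hy
    have hm' : y m = none := Option.not_isSome_iff_eq_none.mp hm
    have hterm : ∀ w : X, optC g (Fin.cons (some w) y) = 0 := by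
      intro w
      exact optC_none g _ m.succ (by rw [Fin.cons_succ]; exact hm')
    rw [Finset.sum_congr rfl fun w _ => hterm w, Finset.sum_const_zero]
    rw [optC, dif_neg]
    · intro h
      have := h m
      rw [hm'] at this
      exact Bool.false_ne_true this

end Chunk5
section Chunk6

open Function Finset Equiv

variable {X Y Z : Type*}

lemma unitChain_cons_none {n : ℕ} [DecidableEq X] {t : Fin n → X} (ht : Function.Injective t) :
    (unitChain (Fin.cons none (some ∘ t) : Fin (n+1) → Option X)) =
      coneAt none (optC (unitChain t)) := by
  funext s
  have ht' : Function.Injective (Fin.cons (none : Option X) (some ∘ t)) :=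
    cons_injective (fun j => Option.some_ne_none (t j)) ((Option.some_injective X).comp ht)
  by_cases hex : ∃ i, s i = none
  · obtain ⟨i, hi⟩ := hex
    by_cases h2 : ∃ m, m ≠ i ∧ s m = none
    · obtain ⟨m, hmi, hm⟩ := h2
      have hs : ¬ Function.Injective s := by
        intro hinj; exact hmi (hinj (hm.trans hi.symm))
      rw [unitChain_eq_zero_of_not_injective ht' hs, coneAt]
      symm; apply Finset.sum_eq_zero
      intro i' _
      by_cases hsi' : s i' = none
      · rw [if_pos hsi']
        have hone : ∃ m', m' ≠ i' ∧ s m' = none := by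
          by_cases hii' : i = i'
          · exact ⟨m, by rw [← hii']; exact hmi, hm⟩
          · exact ⟨i, hii', hi⟩
        obtain ⟨m', hm'i, hm'⟩ := hone
        obtain ⟨j, hj⟩ := Fin.exists_succAbove_eq hm'i
        rw [optC_none _ _ j (by rw [Function.comp_apply, hj]; exact hm'), mul_zero]
      · rw [if_neg hsi']
    · push_neg at h2
      have hsome : ∀ j, (s (i.succAbove j)).isSome := by
        intro j
        exact Option.ne_none_iff_isSome.mp (h2 _ (Fin.succAbove_ne i j))
      set z : Fin n → X := fun j => (s (i.succAbove j)).get (hsome j) with hzdef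
      have hz : ∀ j, s (i.succAbove j) = some (z j) := fun j => (Option.some_get _).symm
      have hconsρ : s ∘ ⇑((Fin.cycleRange i).symm) = Fin.cons none (some ∘ z) := by
        funext m
        induction m using Fin.cases with
        | zero => rw [Function.comp_apply, Fin.cycleRange_symm_zero, hi, Fin.cons_zero]
        | succ j => rw [Function.comp_apply, Fin.cycleRange_symm_succ, hz j, Fin.cons_succ]; rfl
      have halt := (altChain_unitChain (Fin.cons (none : Option X) (some ∘ t))).sgn_apply
        ((Fin.cycleRange i).symm) s
      rw [hconsρ] at halt
      rw [unitChain_cons (v := some ∘ t) (none : Option X) (fun j => Option.some_ne_none (t j))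
        (some ∘ z), unitChain_comp_left (Option.some_injective X)] at halt
      -- halt : unitChain t z = sgn ρ * unitChain t' s
      have hLHS : unitChain (Fin.cons (none : Option X) (some ∘ t)) s =
          (-1 : ℝ) ^ (i : ℕ) * unitChain t z := by
        rw [halt, ← mul_assoc, ← sgn_cycleRange_symm i, sgn_mul_self, one_mul]
      rw [hLHS, coneAt]
      symm
      rw [Finset.sum_eq_single i]
      · rw [if_pos hi]
        have harg : s ∘ i.succAbove = some ∘ z := funext hz
        rw [harg, optC_some]
      · intro b _ hb
        rw [if_neg (h2 b hb)]
      · intro h; exact absurd (Finset.mem_univ _) h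
  · push_neg at hex
    have hLHS : unitChain (Fin.cons (none : Option X) (some ∘ t)) s = 0 := by
      apply unitChain_eq_zero_of_forall_ne
      intro π h
      have := congrFun h (π.symm 0)
      rw [Function.comp_apply, Equiv.apply_symm_apply, Fin.cons_zero] at this
      exact hex _ this
    rw [hLHS, coneAt]
    symm
    apply Finset.sum_eq_zero
    intro i' _
    rw [if_neg (hex i')]

lemma exists_perm_of_range_eq {n : ℕ} {z z' : Fin n → X} (hz : Function.Injective z)
    (hz' : Function.Injective z') (h : Set.range z = Set.range z') :
    ∃ σ : Equiv.Perm (Fin n), z' = z ∘ ⇑σ := by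
  refine ⟨(Equiv.ofInjective z' hz').trans ((Equiv.setCongr h.symm).trans
    (Equiv.ofInjective z hz).symm), ?_⟩
  funext j
  rw [Function.comp_apply]
  simp only [Equiv.trans_apply]
  rw [Equiv.apply_ofInjective_symm hz]
  rfl

lemma insertNth_comp_cycle {n : ℕ} (a : Y) (z : Fin n → Y) (i : Fin (n + 1)) :
    (i.insertNth a z) ∘ ⇑((Fin.cycleRange i).symm) = Fin.cons a z := by
  funext m
  induction m using Fin.cases with
  | zero =>
    rw [Function.comp_apply, Fin.cycleRange_symm_zero, Fin.insertNth_apply_same, Fin.cons_zero]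
  | succ j =>
    rw [Function.comp_apply, Fin.cycleRange_symm_succ, Fin.insertNth_apply_succAbove,
      Fin.cons_succ]

lemma abs_altChain_insertNth {n : ℕ} {α : (Fin (n + 1) → Y) → ℝ} (h : AltChain α)
    (a : Y) (z : Fin n → Y) (i : Fin (n + 1)) :
    |α (i.insertNth a z)| = |α (Fin.cons a z)| := by
  have := h.sgn_apply ((Fin.cycleRange i).symm) (i.insertNth a z)
  rw [insertNth_comp_cycle] at this
  rw [this, abs_mul, abs_sgn, one_mul]

lemma insert_pair_injective {n : ℕ} :
    Function.Injective (fun p : Fin (n + 1) × (Fin n → X) =>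
      (p.1.insertNth none (some ∘ p.2) : Fin (n + 1) → Option X)) := by
  rintro ⟨i, z⟩ ⟨i', z'⟩ h
  simp only at h
  have hii' : i = i' := by
    by_contra hne
    obtain ⟨j, hj⟩ := Fin.exists_succAbove_eq (show i ≠ i' from hne)
    have := congrFun h i
    rw [Fin.insertNth_apply_same, ← hj, Fin.insertNth_apply_succAbove] at this
    exact Option.some_ne_none _ this.symm
  subst hii'
  have hz : z = z' := by
    funext j
    have := congrFun h (i.succAbove j)
    rw [Fin.insertNth_apply_succAbove, Fin.insertNth_apply_succAbove] at this
    exact Option.some_injective X this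
  rw [hz]

lemma sum_option_tuples {n : ℕ} [Fintype X] [DecidableEq X]
    (F : (Fin (n + 1) → Option X) → ℝ)
    (hF0 : ∀ s : Fin (n + 1) → Option X, (∀ i, s i ≠ none) → F s = 0)
    (hF2 : ∀ s : Fin (n + 1) → Option X, ∀ i j : Fin (n + 1),
      i ≠ j → s i = none → s j = none → F s = 0) :
    ∑ s : Fin (n + 1) → Option X, F s
      = ∑ p : Fin (n + 1) × (Fin n → X),
        F (p.1.insertNth none (some ∘ p.2) : Fin (n + 1) → Option X) := by
  classical
  have himg := Finset.sum_image (g := fun p : Fin (n + 1) × (Fin n → X) =>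
      (p.1.insertNth none (some ∘ p.2) : Fin (n + 1) → Option X)) (f := F)
      (s := (Finset.univ : Finset (Fin (n + 1) × (Fin n → X))))
      (fun p _ q _ h => insert_pair_injective h)
  rw [← himg]
  symm
  apply Finset.sum_subset (Finset.subset_univ _)
  intro s _ hs
  by_cases h0 : ∀ i, s i ≠ none
  · exact hF0 s h0
  push_neg at h0
  obtain ⟨i, hi⟩ := h0
  by_cases h2 : ∃ m, m ≠ i ∧ s m = none
  · obtain ⟨m, hmi, hm⟩ := h2
    exact hF2 s m i hmi hm hi
  push_neg at h2
  exfalso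
  apply hs
  have hsome : ∀ j, (s (i.succAbove j)).isSome :=
    fun j => Option.ne_none_iff_isSome.mp (h2 _ (Fin.succAbove_ne i j))
  refine Finset.mem_image.mpr ⟨⟨i, fun j => (s (i.succAbove j)).get (hsome j)⟩,
    Finset.mem_univ _, ?_⟩
  simp only
  funext m
  by_cases hmi : m = i
  · subst hmi
    rw [Fin.insertNth_apply_same, hi]
  · obtain ⟨j, hj⟩ := Fin.exists_succAbove_eq (Ne.symm (fun h => hmi h.symm))
    rw [← hj, Fin.insertNth_apply_succAbove]
    exact Option.some_get _

end Chunk6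
section Chunk7

open Function Finset Equiv

variable {X Y Z : Type*}

lemma strip_exists {K : ℕ} {s : Fin (K + 1) → Option X} (hs : Function.Injective s)
    {i : Fin (K + 1)} (hi : s i = none) :
    ∃ z : Fin K → X, ∀ j, s (i.succAbove j) = some (z j) := by
  have hsome : ∀ j, (s (i.succAbove j)).isSome := by
    intro j
    rw [Option.isSome_iff_ne_none]
    intro hnone
    exact Fin.succAbove_ne i j (hs (hnone.trans hi.symm))
  exact ⟨fun j => (s (i.succAbove j)).get (hsome j), fun j => (Option.some_get _).symm⟩

lemma strip_inj {K : ℕ} {s : Fin (K + 1) → Option X} (hs : Function.Injective s)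
    {i : Fin (K + 1)} {z : Fin K → X} (hz : ∀ j, s (i.succAbove j) = some (z j)) :
    Function.Injective z := by
  intro a b hab
  have : s (i.succAbove a) = s (i.succAbove b) := by rw [hz a, hz b, hab]
  exact Fin.succAbove_right_injective (hs this)

lemma apexExt_apply {K : ℕ} (d : (Fin K → X) → ℝ) {s : Fin (K + 1) → Option X}
    (hs : Function.Injective s) {i : Fin (K + 1)} (hi : s i = none)
    {z : Fin K → X} (hz : ∀ j, s (i.succAbove j) = some (z j)) :
    apexExt d s = d z := by
  have hex : Function.Injective s ∧ ∃ i', s i' = none := ⟨hs, i, hi⟩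
  rw [apexExt, dif_pos hex]
  have hc : Classical.choose hex.2 = i := hs ((Classical.choose_spec hex.2).trans hi.symm)
  have key : ∀ (i' : Fin (K + 1)) (_ : i' = i) (pf : ∀ j, (s (i'.succAbove j)).isSome),
      d (fun j => (s (i'.succAbove j)).get (pf j)) = d z := by
    rintro i' rfl pf
    congr 1
    funext j
    exact Option.some_injective X (by rw [Option.some_get, hz j])
  exact key _ hc _

lemma apexExt_nonneg {K : ℕ} {d : (Fin K → X) → ℝ} (hd : IsPseudoMetric K d)
    (s : Fin (K + 1) → Option X) : 0 ≤ apexExt d s := by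
  rw [apexExt]
  split
  · exact hd.nonneg _
  · exact le_refl 0

lemma apexExt_eq_zero_of_not_injective {K : ℕ} (d : (Fin K → X) → ℝ)
    {s : Fin (K + 1) → Option X} (hs : ¬ Function.Injective s) : apexExt d s = 0 := by
  rw [apexExt, dif_neg]
  intro h
  exact hs h.1

lemma apexExt_eq_zero_of_no_none {K : ℕ} (d : (Fin K → X) → ℝ)
    {s : Fin (K + 1) → Option X} (hs : ∀ i, s i ≠ none) : apexExt d s = 0 := by
  rw [apexExt, dif_neg]
  rintro ⟨-, i, hi⟩
  exact hs i hi

lemma apexExt_insertNth {K : ℕ} {d : (Fin K → X) → ℝ} (hd : IsPseudoMetric K d)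
    (i : Fin (K + 1)) (z : Fin K → X) :
    apexExt d (i.insertNth none (some ∘ z) : Fin (K + 1) → Option X) = d z := by
  by_cases hz : Function.Injective z
  · have hinj : Function.Injective (i.insertNth none (some ∘ z) : Fin (K + 1) → Option X) := by
      intro m m' h
      by_cases hm : m = i <;> by_cases hm' : m' = i
      · rw [hm, hm']
      · exfalso
        obtain ⟨j, hj⟩ := Fin.exists_succAbove_eq (show m' ≠ i from hm')
        rw [hm, Fin.insertNth_apply_same, ← hj, Fin.insertNth_apply_succAbove] at h
        exact Option.some_ne_none _ h.symm
      · exfalso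
        obtain ⟨j, hj⟩ := Fin.exists_succAbove_eq (show m ≠ i from hm)
        rw [hm', Fin.insertNth_apply_same, ← hj, Fin.insertNth_apply_succAbove] at h
        exact Option.some_ne_none _ h
      · obtain ⟨j, hj⟩ := Fin.exists_succAbove_eq (show m ≠ i from hm)
        obtain ⟨j', hj'⟩ := Fin.exists_succAbove_eq (show m' ≠ i from hm')
        rw [← hj, ← hj', Fin.insertNth_apply_succAbove, Fin.insertNth_apply_succAbove] at h
        rw [← hj, ← hj', hz (Option.some_injective X h)]
    exact apexExt_apply d hinj (Fin.insertNth_apply_same i _ _)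
      (fun j => Fin.insertNth_apply_succAbove i _ _ j)
  · rw [hd.eq_zero z hz]
    apply apexExt_eq_zero_of_not_injective
    intro hinj
    apply hz
    intro a b hab
    have : (i.insertNth none (some ∘ z) : Fin (K + 1) → Option X) (i.succAbove a)
        = (i.insertNth none (some ∘ z) : Fin (K + 1) → Option X) (i.succAbove b) := by
      rw [Fin.insertNth_apply_succAbove, Fin.insertNth_apply_succAbove]
      exact congrArg some hab
    exact Fin.succAbove_right_injective (hinj this)

lemma apexExt_perm {K : ℕ} {d : (Fin K → X) → ℝ} (hd : IsPseudoMetric K d)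
    (π : Equiv.Perm (Fin (K + 1))) (s : Fin (K + 1) → Option X) :
    apexExt d (s ∘ ⇑π) = apexExt d s := by
  by_cases h : Function.Injective s ∧ ∃ i, s i = none
  · obtain ⟨hs, i, hi⟩ := h
    have hs' : Function.Injective (s ∘ ⇑π) := hs.comp π.injective
    have hi' : (s ∘ ⇑π) (π.symm i) = none := by
      rw [Function.comp_apply, Equiv.apply_symm_apply]; exact hi
    obtain ⟨z, hz⟩ := strip_exists hs hi
    obtain ⟨z', hz'⟩ := strip_exists hs' hi'
    rw [apexExt_apply d hs hi hz, apexExt_apply d hs' hi' hz']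
    -- show d z' = d z
    have hrange : Set.range z = Set.range z' := by
      have h1 : some ∘ z = s ∘ i.succAbove := by funext j; exact (hz j).symm
      have h2 : some ∘ z' = (s ∘ ⇑π) ∘ (π.symm i).succAbove := by funext j; exact (hz' j).symm
      have r1 : Set.range (some ∘ z) = s '' {i}ᶜ := by
        rw [h1, Set.range_comp, Fin.range_succAbove]
      have r2 : Set.range (some ∘ z') = s '' {i}ᶜ := by
        rw [h2, Set.range_comp (s ∘ ⇑π), Fin.range_succAbove, Set.image_comp,
          Set.image_compl_eq π.bijective, Set.image_singleton, Equiv.apply_symm_apply]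
      have : Set.range (some ∘ z) = Set.range (some ∘ z') := by rw [r1, r2]
      rw [Set.range_comp, Set.range_comp] at this
      exact Set.image_injective.mpr (Option.some_injective X) this
    obtain ⟨σ, hσ⟩ := exists_perm_of_range_eq (strip_inj hs hz) (strip_inj hs' hz') hrange
    rw [hσ, hd.perm]
  · rw [apexExt, apexExt, dif_neg h, dif_neg]
    intro h'
    apply h
    constructor
    · intro a b hab
      have := h'.1 (show (s ∘ ⇑π) (π.symm a) = (s ∘ ⇑π) (π.symm b) by
        simp only [Function.comp_apply, Equiv.apply_symm_apply]; exact hab)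
      have := congrArg π this
      simpa using this
    · obtain ⟨i, hi⟩ := h'.2
      exact ⟨π i, hi⟩

end Chunk7
section Chunk8

open Function Finset Equiv

variable {X Y Z : Type*}

lemma bdry_coneAt_apply [Fintype Y] [DecidableEq Y] {n : ℕ} (a : Y)
    (g : (Fin (n + 1) → Y) → ℝ) (z : Fin (n + 1) → Y) :
    bdry (coneAt a g) z = g z - coneAt a (bdry g) z := by
  rw [bdry_coneAt]

lemma bdry_optC_apply [Fintype X] {n : ℕ} (g : (Fin (n + 1) → X) → ℝ) (y : Fin n → Option X) :
    bdry (optC g) y = optC (bdry g) y := congrFun (bdry_optC g) y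

-- The "mpr" strong simplex inequality for the apex extension
lemma apex_strong_of_strong {k : ℕ} [Fintype X] [DecidableEq X]
    {d : (Fin (k + 2) → X) → ℝ} (hd : IsPseudoMetric (k + 2) d)
    (hstrong : ∀ t : Fin (k + 2) → X, Function.Injective t →
      ∀ β : (Fin (k + 2) → X) → ℝ, AltChain β → bdry β = bdry (unitChain t) →
        ((k + 2).factorial : ℝ) * d t ≤ ∑ z : Fin (k + 2) → X, |β z| * d z)
    (t : Fin (k + 3) → Option X) (ht : Function.Injective t)
    (α : (Fin (k + 3) → Option X) → ℝ) (hAlt : AltChain α)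
    (hbd : bdry α = bdry (unitChain t)) :
    ((k + 3).factorial : ℝ) * apexExt d t
      ≤ ∑ s : Fin (k + 3) → Option X, |α s| * apexExt d s := by
  by_cases hex : ∃ i, t i = none
  · obtain ⟨i, hi⟩ := hex
    obtain ⟨u, hu⟩ := strip_exists ht hi
    have hui := strip_inj ht hu
    have hdt : apexExt d t = d u := apexExt_apply d ht hi hu
    set β : (Fin (k + 2) → X) → ℝ :=
      fun z => (-1 : ℝ) ^ (i : ℕ) * α (Fin.cons none (some ∘ z)) with hβdef
    have hAltβ : AltChain β := by
      intro σ x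
      show (-1 : ℝ) ^ (i : ℕ) * α (Fin.cons none (some ∘ (x ∘ ⇑σ))) = _
      have harg : (some ∘ (x ∘ ⇑σ) : Fin (k + 2) → Option X) = (some ∘ x) ∘ ⇑σ := rfl
      have hthis := hAlt.sgn_apply (Equiv.Perm.decomposeFin.symm (0, σ))
        (Fin.cons none (some ∘ x))
      rw [cons_comp_decompose, sgn_decompose0] at hthis
      rw [harg, hthis, ← sgn_def]
      show _ = sgn σ * ((-1 : ℝ) ^ (i : ℕ) * α (Fin.cons none (some ∘ x)))
      ring
    have hconsρ : t ∘ ⇑((Fin.cycleRange i).symm) = Fin.cons none (some ∘ u) := by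
      funext m
      induction m using Fin.cases with
      | zero => rw [Function.comp_apply, Fin.cycleRange_symm_zero, hi, Fin.cons_zero]
      | succ j => rw [Function.comp_apply, Fin.cycleRange_symm_succ, hu j, Fin.cons_succ]; rfl
    have h01 : (0 : Fin (k + 3)) ≠ 1 := Fin.zero_ne_one
    have hbdβ : bdry β = bdry (unitChain u) := by
      funext y
      have hCnoninj : ¬ Function.Injective
          (Fin.cons (none : Option X) (Fin.cons none (some ∘ y)) : Fin (k + 3) → Option X) := by
        intro hinj
        apply h01
        apply hinj
        rw [Fin.cons_zero, ← Fin.succ_zero_eq_one, Fin.cons_succ, Fin.cons_zero]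
      have hswap : ∀ w : X,
          (Fin.cons (none : Option X) (some ∘ Fin.cons w y) : Fin (k + 3) → Option X)
            = Fin.cons (some w) (Fin.cons none (some ∘ y)) ∘ ⇑(Equiv.swap (0 : Fin (k + 3)) 1) := by
        intro w
        have h1 : (some ∘ Fin.cons w y : Fin (k + 2) → Option X)
            = Fin.cons (some w) (some ∘ y) := comp_cons' some w y
        rw [h1]
        exact cons_cons_swap none (some w) (some ∘ y)
      calc bdry β y = ∑ w : X, β (Fin.cons w y) := rfl
        _ = ∑ w : X, -((-1 : ℝ) ^ (i : ℕ) * α (Fin.cons (some w) (Fin.cons none (some ∘ y)))) := by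
            refine Finset.sum_congr rfl fun w _ => ?_
            show (-1 : ℝ) ^ (i : ℕ) * α (Fin.cons none (some ∘ Fin.cons w y)) = _
            rw [hswap w, hAlt.sgn_apply (Equiv.swap (0 : Fin (k + 3)) 1), sgn_swap h01]
            ring
        _ = -((-1 : ℝ) ^ (i : ℕ) * bdry α (Fin.cons none (some ∘ y))) := by
            have hnone : α (Fin.cons none (Fin.cons none (some ∘ y))) = 0 :=
              hAlt.eq_zero_of_not_injective hCnoninj
            have hexp : bdry α (Fin.cons none (some ∘ y))
                = ∑ w : X, α (Fin.cons (some w) (Fin.cons none (some ∘ y))) := by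
              rw [bdry, Fintype.sum_option]
              rw [show (Fin.cons (none : Option X) (Fin.cons none (some ∘ y))
                : Fin (k+3) → Option X) = Fin.cons none (Fin.cons none (some ∘ y)) from rfl] at hnone
              rw [hnone, zero_add]
            rw [hexp, Finset.sum_neg_distrib, ← Finset.mul_sum]
        _ = -((-1 : ℝ) ^ (i : ℕ) * bdry (unitChain t) (Fin.cons none (some ∘ y))) := by rw [hbd]
        _ = ∑ w : X, (-1 : ℝ) ^ (i : ℕ) * unitChain t (Fin.cons none (some ∘ Fin.cons w y)) := by
            have hnone : unitChain t (Fin.cons none (Fin.cons none (some ∘ y))) = 0 :=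
              unitChain_eq_zero_of_not_injective ht hCnoninj
            have hexp : bdry (unitChain t) (Fin.cons none (some ∘ y))
                = ∑ w : X, unitChain t (Fin.cons (some w) (Fin.cons none (some ∘ y))) := by
              rw [bdry, Fintype.sum_option, hnone, zero_add]
            rw [hexp]
            symm
            have hterm : ∀ w : X, (-1 : ℝ) ^ (i : ℕ)
                * unitChain t (Fin.cons none (some ∘ Fin.cons w y))
                = -((-1 : ℝ) ^ (i : ℕ)
                    * unitChain t (Fin.cons (some w) (Fin.cons none (some ∘ y)))) := by
              intro w
              rw [hswap w, (altChain_unitChain t).sgn_apply (Equiv.swap (0 : Fin (k + 3)) 1),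
                sgn_swap h01]
              ring
            rw [Finset.sum_congr rfl fun w _ => hterm w, Finset.sum_neg_distrib, ← Finset.mul_sum]
        _ = ∑ w : X, unitChain u (Fin.cons w y) := by
            refine Finset.sum_congr rfl fun w _ => ?_
            have hcomp := unitChain_comp_perm t ((Fin.cycleRange i).symm)
              (Fin.cons none (some ∘ Fin.cons w y))
            rw [hconsρ, unitChain_cons (v := some ∘ u) (none : Option X)
              (fun j => Option.some_ne_none _) (some ∘ Fin.cons w y),
              unitChain_comp_left (Option.some_injective X), sgn_cycleRange_symm] at hcomp
            rw [← hcomp]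
        _ = bdry (unitChain u) y := rfl
    have hkey := hstrong u hui β hAltβ hbdβ
    have hsum_pairs : ∀ p : Fin (k + 3) × (Fin (k + 2) → X),
        |α (p.1.insertNth none (some ∘ p.2) : Fin (k + 3) → Option X)|
            * apexExt d (p.1.insertNth none (some ∘ p.2)) = |β p.2| * d p.2 := by
      rintro ⟨j, z⟩
      simp only
      rw [apexExt_insertNth hd, abs_altChain_insertNth hAlt none (some ∘ z) j]
      have habs : |β z| = |α (Fin.cons none (some ∘ z))| := by
        show |(-1 : ℝ) ^ (i : ℕ) * α (Fin.cons none (some ∘ z))| = _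
        rw [abs_mul, abs_pow, abs_neg, abs_one, one_pow, one_mul]
      rw [habs]
    have hle : ∑ p : Fin (k + 3) × (Fin (k + 2) → X), |β p.2| * d p.2
        ≤ ∑ s : Fin (k + 3) → Option X, |α s| * apexExt d s := by
      have himg := Finset.sum_image (g := fun p : Fin (k + 3) × (Fin (k + 2) → X) =>
          (p.1.insertNth none (some ∘ p.2) : Fin (k + 3) → Option X))
          (f := fun s : Fin (k + 3) → Option X => |α s| * apexExt d s)
          (s := (Finset.univ : Finset (Fin (k + 3) × (Fin (k + 2) → X))))
          (fun p _ q _ h => insert_pair_injective h)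
      calc ∑ p : Fin (k + 3) × (Fin (k + 2) → X), |β p.2| * d p.2
          = ∑ p : Fin (k + 3) × (Fin (k + 2) → X),
              |α (p.1.insertNth none (some ∘ p.2) : Fin (k + 3) → Option X)|
                * apexExt d (p.1.insertNth none (some ∘ p.2)) :=
            Finset.sum_congr rfl fun p _ => (hsum_pairs p).symm
        _ = ∑ s ∈ Finset.image (fun p : Fin (k + 3) × (Fin (k + 2) → X) =>
              (p.1.insertNth none (some ∘ p.2) : Fin (k + 3) → Option X)) Finset.univ,
                |α s| * apexExt d s := himg.symm
        _ ≤ ∑ s : Fin (k + 3) → Option X, |α s| * apexExt d s :=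
            Finset.sum_le_sum_of_subset_of_nonneg (Finset.subset_univ _)
              (fun s _ _ => mul_nonneg (abs_nonneg _) (apexExt_nonneg hd s))
    have hfac : ((k + 3).factorial : ℝ) = (k + 3 : ℝ) * ((k + 2).factorial : ℝ) := by
      rw [show (k + 3) = (k + 2) + 1 from rfl, Nat.factorial_succ]
      push_cast; ring
    calc ((k + 3).factorial : ℝ) * apexExt d t
        = (k + 3 : ℝ) * (((k + 2).factorial : ℝ) * d u) := by rw [hdt, hfac]; ring
      _ ≤ (k + 3 : ℝ) * ∑ z : Fin (k + 2) → X, |β z| * d z := by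
          apply mul_le_mul_of_nonneg_left hkey (by positivity)
      _ = ∑ p : Fin (k + 3) × (Fin (k + 2) → X), |β p.2| * d p.2 := by
          rw [Fintype.sum_prod_type]
          show _ = ∑ _x : Fin (k + 3), ∑ y : Fin (k + 2) → X, |β y| * d y
          rw [Finset.sum_const, Finset.card_univ, Fintype.card_fin, nsmul_eq_mul]
          push_cast; ring
      _ ≤ ∑ s : Fin (k + 3) → Option X, |α s| * apexExt d s := hle
  · push_neg at hex
    rw [apexExt_eq_zero_of_no_none d hex, mul_zero]
    exact Finset.sum_nonneg fun s _ => mul_nonneg (abs_nonneg _) (apexExt_nonneg hd s)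

end Chunk8
section Chunk9

open Function Finset Equiv

variable {X Y Z : Type*}

lemma strong_of_apex_strong {k : ℕ} [Fintype X] [DecidableEq X]
    {d : (Fin (k + 2) → X) → ℝ} (hd : IsPseudoMetric (k + 2) d)
    (hstrong : ∀ t' : Fin (k + 3) → Option X, Function.Injective t' →
      ∀ α' : (Fin (k + 3) → Option X) → ℝ, AltChain α' → bdry α' = bdry (unitChain t') →
        ((k + 3).factorial : ℝ) * apexExt d t'
          ≤ ∑ s : Fin (k + 3) → Option X, |α' s| * apexExt d s)
    (t : Fin (k + 2) → X) (ht : Function.Injective t)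
    (α : (Fin (k + 2) → X) → ℝ) (hAlt : AltChain α)
    (hbd : bdry α = bdry (unitChain t)) :
    ((k + 2).factorial : ℝ) * d t ≤ ∑ z : Fin (k + 2) → X, |α z| * d z := by
  set γ : (Fin (k + 2) → X) → ℝ := fun z => unitChain t z - α z with hγdef
  have hAltγ : AltChain γ := by
    intro π x
    show unitChain t (x ∘ ⇑π) - α (x ∘ ⇑π) = _
    rw [(altChain_unitChain t).sgn_apply π x, hAlt.sgn_apply π x, ← sgn_def]
    show _ = sgn π * (unitChain t x - α x)
    ring
  have hAltδ : AltChain (coneAt (t 0) γ) := altChain_coneAt _ hAltγ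
  set α'' : (Fin (k + 3) → Option X) → ℝ :=
    fun s => coneAt none (optC α) s + optC (coneAt (t 0) γ) s with hα''def
  have hAltα'' : AltChain α'' := by
    intro π x
    show coneAt none (optC α) (x ∘ ⇑π) + optC (coneAt (t 0) γ) (x ∘ ⇑π) = _
    rw [(altChain_coneAt none (altChain_optC hAlt)).sgn_apply π x,
      (altChain_optC hAltδ).sgn_apply π x, ← sgn_def]
    show _ = sgn π * (coneAt none (optC α) x + optC (coneAt (t 0) γ) x)
    ring
  have ht' : Function.Injective (Fin.cons (none : Option X) (some ∘ t) : Fin (k+3) → Option X) :=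
    cons_injective (fun j => Option.some_ne_none _) ((Option.some_injective X).comp ht)
  have hγbd : bdry γ = fun _ => (0 : ℝ) := by
    funext y
    show (∑ w : X, (unitChain t (Fin.cons w y) - α (Fin.cons w y))) = 0
    rw [Finset.sum_sub_distrib]
    have h1 : ∑ w : X, α (Fin.cons w y) = bdry α y := rfl
    have h2 : ∑ w : X, unitChain t (Fin.cons w y) = bdry (unitChain t) y := rfl
    rw [h1, h2, hbd, sub_self]
  have hδbd : bdry (coneAt (t 0) γ) = γ := by
    funext z
    rw [bdry_coneAt_apply, hγbd]
    have hzero : coneAt (t 0) (fun _ => (0 : ℝ)) z = 0 := by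
      rw [coneAt]
      apply Finset.sum_eq_zero
      intro i _
      split <;> simp
    rw [hzero, sub_zero]
  have hbd'' : bdry α'' = bdry (unitChain (Fin.cons (none : Option X) (some ∘ t))) := by
    funext y
    calc bdry α'' y = bdry (coneAt none (optC α)) y + bdry (optC (coneAt (t 0) γ)) y := by
          show (∑ w : Option X, (coneAt none (optC α) (Fin.cons w y)
            + optC (coneAt (t 0) γ) (Fin.cons w y))) = _
          rw [Finset.sum_add_distrib]
          rfl
      _ = (optC α y - coneAt none (optC (bdry α)) y) + optC (bdry (coneAt (t 0) γ)) y := by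
          rw [bdry_coneAt_apply, bdry_optC, bdry_optC]
      _ = (optC α y - coneAt none (optC (bdry (unitChain t))) y) + optC γ y := by
          rw [hbd, hδbd]
      _ = optC (unitChain t) y - coneAt none (optC (bdry (unitChain t))) y := by
          have hγo : optC γ y = optC (unitChain t) y - optC α y := optC_sub (unitChain t) α y
          rw [hγo]; ring
      _ = optC (unitChain t) y - coneAt none (bdry (optC (unitChain t))) y := by
          rw [bdry_optC]
      _ = bdry (coneAt none (optC (unitChain t))) y :=
          (bdry_coneAt_apply none (optC (unitChain t)) y).symm
      _ = bdry (unitChain (Fin.cons (none : Option X) (some ∘ t))) y := by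
          rw [unitChain_cons_none ht]
  have happ := hstrong (Fin.cons (none : Option X) (some ∘ t)) ht' α'' hAltα'' hbd''
  have ht'val : apexExt d (Fin.cons (none : Option X) (some ∘ t)) = d t := by
    refine apexExt_apply d ht' (i := 0) (Fin.cons_zero _ _) (fun j => ?_)
    rw [Fin.zero_succAbove, Fin.cons_succ]
    rfl
  have hF := sum_option_tuples (fun s => |α'' s| * apexExt d s)
    (fun s hs => by
      show |α'' s| * apexExt d s = 0
      rw [apexExt_eq_zero_of_no_none d hs, mul_zero])
    (fun s i j hij hi hj => by
      show |α'' s| * apexExt d s = 0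
      rw [apexExt_eq_zero_of_not_injective d
        (fun hinj => hij (hinj (hi.trans hj.symm))), mul_zero])
  have hpb : ∀ p : Fin (k + 3) × (Fin (k + 2) → X),
      |α'' (p.1.insertNth none (some ∘ p.2) : Fin (k + 3) → Option X)|
        * apexExt d (p.1.insertNth none (some ∘ p.2)) ≤ |α p.2| * d p.2 := by
    rintro ⟨j, z⟩
    simp only
    rw [apexExt_insertNth hd]
    have hO : optC (coneAt (t 0) γ) (j.insertNth none (some ∘ z) : Fin (k + 3) → Option X) = 0 :=
      optC_none _ _ j (Fin.insertNth_apply_same j _ _)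
    have hC : coneAt none (optC α) (j.insertNth none (some ∘ z) : Fin (k + 3) → Option X)
        = (-1 : ℝ) ^ (j : ℕ) * α z := by
      rw [coneAt, Finset.sum_eq_single j]
      · rw [if_pos (Fin.insertNth_apply_same j _ _)]
        have harg : (j.insertNth none (some ∘ z) : Fin (k + 3) → Option X) ∘ j.succAbove
            = some ∘ z := funext fun m => Fin.insertNth_apply_succAbove j _ _ m
        rw [harg, optC_some]
      · intro b _ hb
        rw [if_neg]
        obtain ⟨m, hm⟩ := Fin.exists_succAbove_eq (show b ≠ j from hb)
        rw [← hm, Fin.insertNth_apply_succAbove]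
        exact Option.some_ne_none _
      · intro h; exact absurd (Finset.mem_univ _) h
    have habs : |α'' (j.insertNth none (some ∘ z) : Fin (k + 3) → Option X)| = |α z| := by
      show |coneAt none (optC α) (j.insertNth none (some ∘ z) : Fin (k + 3) → Option X)
        + optC (coneAt (t 0) γ) (j.insertNth none (some ∘ z) : Fin (k + 3) → Option X)| = _
      rw [hC, hO, add_zero, abs_mul, abs_pow, abs_neg, abs_one, one_pow, one_mul]
    rw [habs]
  have hfac : ((k + 3).factorial : ℝ) = (k + 3 : ℝ) * ((k + 2).factorial : ℝ) := by
    rw [show (k + 3) = (k + 2) + 1 from rfl, Nat.factorial_succ]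
    push_cast; ring
  have hchain : (k + 3 : ℝ) * (((k + 2).factorial : ℝ) * d t)
      ≤ (k + 3 : ℝ) * ∑ z : Fin (k + 2) → X, |α z| * d z := by
    calc (k + 3 : ℝ) * (((k + 2).factorial : ℝ) * d t)
        = ((k + 3).factorial : ℝ) * apexExt d (Fin.cons (none : Option X) (some ∘ t)) := by
          rw [ht'val, hfac]; ring
      _ ≤ ∑ s : Fin (k + 3) → Option X, |α'' s| * apexExt d s := happ
      _ = ∑ p : Fin (k + 3) × (Fin (k + 2) → X),
            |α'' (p.1.insertNth none (some ∘ p.2) : Fin (k + 3) → Option X)|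
              * apexExt d (p.1.insertNth none (some ∘ p.2)) := hF
      _ ≤ ∑ p : Fin (k + 3) × (Fin (k + 2) → X), |α p.2| * d p.2 :=
          Finset.sum_le_sum fun p _ => hpb p
      _ = (k + 3 : ℝ) * ∑ z : Fin (k + 2) → X, |α z| * d z := by
          rw [Fintype.sum_prod_type]
          show (∑ _x : Fin (k + 3), ∑ y : Fin (k + 2) → X, |α y| * d y) = _
          rw [Finset.sum_const, Finset.card_univ, Fintype.card_fin, nsmul_eq_mul]
          push_cast; ring
  have hpos : (0 : ℝ) < (k + 3 : ℝ) := by positivity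
  exact le_of_mul_le_mul_left hchain hpos

end Chunk9

/-- for every `k ≥ 2` (arity `k + 2`), if `(X, d)` is a pseudo
metric, then its apex extension is a strong pseudo metric (of arity `k + 3`) iff
`(X, d)` is a strong pseudo metric. -/
theorem stmt_9 (k : ℕ) {X : Type*} [Fintype X] [DecidableEq X]
    (d : (Fin (k + 2) → X) → ℝ) (hd : IsPseudoMetric (k + 2) d) :
    IsStrongPseudoMetric (k + 2) (apexExt d) ↔ IsStrongPseudoMetric (k + 1) d := by
  constructor
  · intro hS
    exact ⟨hd.nonneg, hd.eq_zero, hd.perm, fun t ht α hAlt hbd =>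
      strong_of_apex_strong hd hS.strong_simplex t ht α hAlt hbd⟩
  · intro hS
    exact ⟨apexExt_nonneg hd, fun x hx => apexExt_eq_zero_of_not_injective d hx,
      apexExt_perm hd, fun t ht α hAlt hbd =>
        apex_strong_of_strong hd hS.strong_simplex t ht α hAlt hbd⟩
end

section
/- For every integer k ≥ 3, there exists a pseudo k-metric space that is not a strong pseudo k-metric space; i.e., the family of strong pseudo k-metric spaces is strictly contained in the family of pseudo k-metric spaces. -/
open scoped BigOperators

/-!
Write `K` for the arity and let `X = Fin K × Fin 2`, so that every column `c` holds two points
`c⁺ = (c, 0)` and `c⁻ = (c, 1)`. Put `d = 0` on degenerate tuples, `d = h := 2 ^ K` on tuples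
meeting some column twice, `d = 1` on transversals, except `d = 1 + (K - 1) h` on the orderings
of the base transversal `t = (c⁺)_c`. The simplex inequality holds: replacing one entry of a
transversal by `y` leaves a transversal at exactly one position and repeats a column at the other
`K - 1`, and for `K ≥ 3` a repeated column survives a replacement at some third position.

The strong simplex inequality fails for the chain `α = 1_t - W`, where `W(s) = det (v_c (s_i))`
with `v_c = 1_{c⁺} - 1_{c⁻}` is the fundamental cycle of the boundary of the cross-polytope:
`∂W = 0` since each `v_c` has total mass zero, `W` agrees with `1_t` on the orderings of `t` and
vanishes off transversals, so `∑ |α| d ≤ ∑ |W| = K! 2 ^ K < K! d(t)`.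
-/

open Function

section Chains

variable {X : Type*} {j : ℕ}

theorem AltChain.sub {α β : (Fin j → X) → ℝ} (hα : AltChain α) (hβ : AltChain β) :
    AltChain (α - β) := fun π x => by
  simp only [Pi.sub_apply, hα π x, hβ π x, mul_sub]

theorem bdry_sub [Fintype X] (α β : (Fin (j + 1) → X) → ℝ) :
    bdry (α - β) = bdry α - bdry β := by
  funext y
  simp [bdry, Finset.sum_sub_distrib]

variable [DecidableEq X]

theorem altChain_unitChain_s10 (t : Fin j → X) : AltChain (unitChain t) := fun σ s => by
  rw [unitChain, unitChain, Finset.mul_sum]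
  refine Fintype.sum_equiv (Equiv.mulRight σ⁻¹) _ _ fun ρ => ?_
  have hcomp : s ∘ σ = t ∘ ρ ↔ s = t ∘ ⇑(ρ * σ⁻¹) := by
    constructor <;> rintro h <;> funext i
    · simpa using congrFun h (σ⁻¹ i)
    · simp [h]
  rw [Equiv.coe_mulRight]
  by_cases h : s ∘ σ = t ∘ ρ
  · rw [if_pos h, if_pos (hcomp.mp h), Equiv.Perm.sign_mul, Equiv.Perm.sign_inv, ← Int.cast_mul,
      ← Units.val_mul, mul_left_comm, Int.units_mul_self, mul_one]
  · rw [if_neg h, if_neg (mt hcomp.mpr h), mul_zero]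

theorem unitChain_comp_perm_s10 {t : Fin j → X} (ht : Injective t) (π : Equiv.Perm (Fin j)) :
    unitChain t (t ∘ π) = ((Equiv.Perm.sign π : ℤ) : ℝ) := by
  rw [unitChain, Finset.sum_eq_single π]
  · simp
  · intro ρ _ hρ
    exact if_neg fun h => hρ (Equiv.ext fun i => ht (congrFun h.symm i))
  · simp

theorem unitChain_eq_zero {t s : Fin j → X} (hs : ∀ π : Equiv.Perm (Fin j), s ≠ t ∘ π) :
    unitChain t s = 0 :=
  Finset.sum_eq_zero fun π _ => if_neg (hs π)

end Chains

theorem IsStrongPseudoMetric.factorial_mul_le_of_bdry_eq_zero {X : Type*} [Fintype X]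
    [DecidableEq X] {k : ℕ} {d : (Fin (k + 1) → X) → ℝ} (hd : IsStrongPseudoMetric k d)
    {t : Fin (k + 1) → X} (ht : Injective t) {W : (Fin (k + 1) → X) → ℝ} (hW : AltChain W)
    (hW₀ : bdry W = 0) :
    ((k + 1).factorial : ℝ) * d t ≤ ∑ s, |unitChain t s - W s| * d s :=
  hd.strong_simplex t ht (unitChain t - W) ((altChain_unitChain_s10 t).sub hW)
    (by rw [bdry_sub, hW₀, sub_zero])

section DetChain

variable {X : Type*} {n : ℕ}

noncomputable def detChain (v : Fin n → X → ℝ) (s : Fin n → X) : ℝ :=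
  (Matrix.of fun i j => v j (s i)).det

theorem altChain_detChain (v : Fin n → X → ℝ) : AltChain (detChain v) := fun π s =>
  Matrix.det_permute π (Matrix.of fun i j => v j (s i))

theorem detChain_eq_zero_of_not_injective (v : Fin n → X → ℝ) {s : Fin n → X}
    (hs : ¬ Injective s) : detChain v s = 0 := by
  obtain ⟨a, b, hab, hne⟩ := not_injective_iff.mp hs
  exact Matrix.det_zero_of_row_eq hne (funext fun j => by simp [hab])

theorem bdry_detChain [Fintype X] (v : Fin (n + 1) → X → ℝ) (hv : ∀ c, ∑ x, v c x = 0) :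
    bdry (detChain v) = 0 := by
  -- expand along the row of the added point, whose entries `v c x` sum to zero over `x`
  funext y
  simp only [bdry, detChain, Matrix.det_succ_row_zero, Matrix.of_apply, Fin.cons_zero]
  rw [Finset.sum_comm]
  refine Finset.sum_eq_zero fun j _ => ?_
  simp [Matrix.submatrix, mul_assoc, ← Finset.mul_sum, ← Finset.sum_mul, hv]

theorem abs_det_le_sum_prod_abs (M : Matrix (Fin n) (Fin n) ℝ) :
    |M.det| ≤ ∑ σ : Equiv.Perm (Fin n), ∏ i, |M (σ i) i| := by
  rw [Matrix.det_apply]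
  refine (Finset.abs_sum_le_sum_abs _ _).trans (Finset.sum_le_sum fun σ _ => ?_)
  rw [Units.smul_def, zsmul_eq_mul, abs_mul, Finset.abs_prod]
  rcases Int.units_eq_one_or (Equiv.Perm.sign σ) with h | h <;> simp [h]

theorem sum_abs_detChain_le [Fintype X] (v : Fin n → X → ℝ) :
    ∑ s, |detChain v s| ≤ n.factorial * ∏ c, ∑ x, |v c x| := by
  calc ∑ s, |detChain v s|
      ≤ ∑ s : Fin n → X, ∑ σ : Equiv.Perm (Fin n), ∏ i, |v i (s (σ i))| :=
        Finset.sum_le_sum fun s _ => abs_det_le_sum_prod_abs _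
    _ = ∑ σ : Equiv.Perm (Fin n), ∑ s : Fin n → X, ∏ i, |v i (s i)| := by
        rw [Finset.sum_comm]
        refine Finset.sum_congr rfl fun σ _ => ?_
        exact Fintype.sum_equiv (Equiv.arrowCongr σ.symm (Equiv.refl X)) _ _ fun s => by
          simp [Equiv.arrowCongr_apply]
    _ = n.factorial * ∏ c, ∑ x, |v c x| := by
        simp [Finset.prod_univ_sum, Fintype.piFinset_univ, Fintype.card_perm]

end DetChain

theorem Function.Injective.update_of_forall_ne {α β : Type*} [DecidableEq α] {f : α → β}
    (hf : Injective f) {b : β} (hb : ∀ a, f a ≠ b) (a : α) : Injective (update f a b) := by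
  intro x y hxy
  by_cases hx : x = a <;> by_cases hy : y = a
  · rw [hx, hy]
  · rw [hx, update_self, update_of_ne hy] at hxy; exact absurd hxy.symm (hb y)
  · rw [hy, update_self, update_of_ne hx] at hxy; exact absurd hxy (hb x)
  · rw [update_of_ne hx, update_of_ne hy] at hxy; exact hf hxy

section TransversalMetric

variable {X : Type*} {K : ℕ} (col : X → Fin K) (S : Set X) (h : ℝ)

open Classical in
noncomputable def transversalMetric (s : Fin K → X) : ℝ :=
  if Injective s then
    if Injective (col ∘ s) then (if ∀ i, s i ∈ S then 1 + (K - 1 : ℕ) * h else 1) else h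
  else 0

variable {col S h} {s : Fin K → X}

theorem transversalMetric_of_not_injective (hs : ¬ Injective s) :
    transversalMetric col S h s = 0 := by
  simp [transversalMetric, hs]

theorem transversalMetric_of_not_injective_col (hs : Injective s) (hc : ¬ Injective (col ∘ s)) :
    transversalMetric col S h s = h := by
  simp [transversalMetric, hs, hc]

theorem transversalMetric_of_forall_mem (hs : Injective s) (hc : Injective (col ∘ s))
    (hS : ∀ i, s i ∈ S) : transversalMetric col S h s = 1 + (K - 1 : ℕ) * h := by
  simp [transversalMetric, hs, hc, hS]

theorem transversalMetric_of_not_forall_mem (hs : Injective s) (hc : Injective (col ∘ s))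
    (hS : ¬ ∀ i, s i ∈ S) : transversalMetric col S h s = 1 := by
  simp [transversalMetric, hs, hc, hS]

theorem transversalMetric_nonneg (hh : 0 ≤ h) (s : Fin K → X) :
    0 ≤ transversalMetric col S h s := by
  unfold transversalMetric
  split_ifs <;> positivity

theorem one_le_transversalMetric (hh : 0 ≤ h) (hs : Injective s) (hc : Injective (col ∘ s)) :
    1 ≤ transversalMetric col S h s := by
  unfold transversalMetric
  split_ifs
  · simp only [le_add_iff_nonneg_right]; positivity
  · rfl

theorem transversalMetric_le_of_injective_col (hh : 0 ≤ h) (hc : Injective (col ∘ s)) :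
    transversalMetric col S h s ≤ 1 + (K - 1 : ℕ) * h := by
  have : (0 : ℝ) ≤ (K - 1 : ℕ) * h := by positivity
  unfold transversalMetric
  split_ifs <;> linarith

theorem transversalMetric_comp_perm (π : Equiv.Perm (Fin K)) (s : Fin K → X) :
    transversalMetric col S h (s ∘ π) = transversalMetric col S h s := by
  unfold transversalMetric
  rw [← comp_assoc]
  have hS : (∀ i, (s ∘ π) i ∈ S) ↔ ∀ i, s i ∈ S :=
    (π.surjective.forall (p := (s · ∈ S))).symm
  split_ifs <;> simp_all [π.injective_comp]

theorem transversalMetric_le_sum_update (hK : 3 ≤ K) (hh : 0 ≤ h) (s : Fin K → X) (y : X) :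
    transversalMetric col S h s ≤ ∑ i, transversalMetric col S h (update s i y) := by
  have hle_sum (j : Fin K) : transversalMetric col S h (update s j y)
      ≤ ∑ i, transversalMetric col S h (update s i y) :=
    Finset.single_le_sum (f := fun i => transversalMetric col S h (update s i y))
      (fun i _ => transversalMetric_nonneg hh _) (Finset.mem_univ j)
  by_cases hy : ∃ j, s j = y
  · obtain ⟨j, rfl⟩ := hy
    simpa using hle_sum j
  by_cases hs : Injective s
  swap
  · rw [transversalMetric_of_not_injective hs]
    exact Finset.sum_nonneg fun i _ => transversalMetric_nonneg hh _
  have hupd := hs.update_of_forall_ne (not_exists.mp hy)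
  by_cases hc : Injective (col ∘ s)
  · -- `y` keeps `s` a transversal only where it replaces the entry of its own column `i₀`;
    -- everywhere else it repeats that column
    obtain ⟨i₀, hi₀⟩ := Finite.injective_iff_surjective.mp hc (col y)
    have hc₀ : Injective (col ∘ update s i₀ y) := by
      rwa [comp_update, ← hi₀, update_eq_self]
    have hother : ∀ i ∈ Finset.univ.erase i₀,
        transversalMetric col S h (update s i y) = h := by
      intro i hi
      have hne : i₀ ≠ i := (Finset.ne_of_mem_erase hi).symm
      refine transversalMetric_of_not_injective_col (hupd i) fun H => hne (H ?_)
      simp [update_of_ne hne, ← hi₀]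
    calc transversalMetric col S h s
        ≤ 1 + (K - 1 : ℕ) * h := transversalMetric_le_of_injective_col hh hc
      _ ≤ transversalMetric col S h (update s i₀ y)
            + ∑ i ∈ Finset.univ.erase i₀, transversalMetric col S h (update s i y) := by
        rw [Finset.sum_congr rfl hother, Finset.sum_const,
          Finset.card_erase_of_mem (Finset.mem_univ _), Finset.card_univ, Fintype.card_fin,
          nsmul_eq_mul]
        linarith [one_le_transversalMetric (S := S) hh (hupd i₀) hc₀]
      _ = ∑ i, transversalMetric col S h (update s i y) :=
        Finset.add_sum_erase _ (fun i => transversalMetric col S h (update s i y))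
          (Finset.mem_univ _)
  · -- a repeated column `a, b` survives replacing an entry at a third position `p`
    obtain ⟨a, b, hab, hne⟩ := not_injective_iff.mp hc
    obtain ⟨p, -, hp⟩ := Finset.exists_mem_notMem_of_card_lt_card
      (s := {a, b}) (t := Finset.univ) (by
        rw [Finset.card_univ, Fintype.card_fin]
        exact Finset.card_le_two.trans_lt (by omega))
    simp only [Finset.mem_insert, Finset.mem_singleton, not_or] at hp
    have hp_eq : transversalMetric col S h (update s p y) = h := by
      refine transversalMetric_of_not_injective_col (hupd p) fun H => hne (H ?_)
      simpa [update_of_ne (Ne.symm hp.1), update_of_ne (Ne.symm hp.2)] using hab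
    rw [transversalMetric_of_not_injective_col hs hc]
    exact hp_eq.symm.le.trans (hle_sum p)

theorem isPseudoMetric_transversalMetric (hK : 3 ≤ K) (hh : 0 ≤ h) :
    IsPseudoMetric K (transversalMetric col S h) where
  nonneg := transversalMetric_nonneg hh
  eq_zero _ := transversalMetric_of_not_injective
  perm := transversalMetric_comp_perm
  simplex := transversalMetric_le_sum_update hK hh

end TransversalMetric

section CrossPolytope

variable {X : Type*} {K : ℕ} (e : X ≃ Fin K × Fin 2)

noncomputable def crossCoord (c : Fin K) (x : X) : ℝ :=
  (if e x = (c, 0) then 1 else 0) - (if e x = (c, 1) then 1 else 0)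

def crossBase (i : Fin K) : X := e.symm (i, 0)

theorem crossBase_injective : Injective (crossBase e) := fun i j hij => by
  simpa [crossBase] using hij

theorem sum_crossCoord [Fintype X] (c : Fin K) : ∑ x, crossCoord e c x = 0 := by
  rw [← e.symm.sum_comp]
  simp [crossCoord, Finset.sum_sub_distrib]

theorem sum_abs_crossCoord [Fintype X] (c : Fin K) : ∑ x, |crossCoord e c x| = 2 := by
  rw [← e.symm.sum_comp]
  simp only [crossCoord, Equiv.apply_symm_apply, Fintype.sum_prod_type, Fin.sum_univ_two]
  simp [Prod.ext_iff, Finset.sum_add_distrib, abs_ite, one_add_one_eq_two]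

theorem crossCoord_eq_zero {c : Fin K} {x : X} (hx : (e x).1 ≠ c) : crossCoord e c x = 0 := by
  simp [crossCoord, Prod.ext_iff, hx]

theorem detChain_crossCoord_crossBase : detChain (crossCoord e) (crossBase e) = 1 := by
  refine (congrArg Matrix.det ?_).trans Matrix.det_one
  ext i j
  simp [crossCoord, crossBase, Matrix.one_apply]

theorem detChain_crossCoord_eq_zero {s : Fin K → X} (hc : ¬ Injective (Prod.fst ∘ e ∘ s)) :
    detChain (crossCoord e) s = 0 := by
  obtain ⟨c, hc⟩ := not_forall.mp (mt Finite.injective_iff_surjective.mpr hc)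
  exact Matrix.det_eq_zero_of_column_eq_zero c fun i => crossCoord_eq_zero e (not_exists.mp hc i)

theorem exists_eq_crossBase_comp_perm {s : Fin K → X} (hc : Injective (Prod.fst ∘ e ∘ s))
    (hS : ∀ i, (e (s i)).2 = 0) : ∃ π : Equiv.Perm (Fin K), s = crossBase e ∘ π :=
  ⟨Equiv.ofBijective _ (Finite.injective_iff_bijective.mp hc), funext fun i => by
    simp [crossBase, ← hS i]⟩

theorem abs_sub_mul_transversalMetric_le [DecidableEq X] (h : ℝ) (s : Fin K → X) :
    |unitChain (crossBase e) s - detChain (crossCoord e) s|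
        * transversalMetric (Prod.fst ∘ e) {x | (e x).2 = 0} h s
      ≤ |detChain (crossCoord e) s| := by
  by_cases hπ : ∃ π : Equiv.Perm (Fin K), s = crossBase e ∘ π
  · obtain ⟨π, rfl⟩ := hπ
    rw [unitChain_comp_perm_s10 (crossBase_injective e), altChain_detChain _ π,
      detChain_crossCoord_crossBase, mul_one, sub_self, abs_zero, zero_mul]
    exact abs_nonneg _
  rw [unitChain_eq_zero (not_exists.mp hπ), zero_sub, abs_neg]
  by_cases hW : detChain (crossCoord e) s = 0
  · simp [hW]
  have hs : Injective s := by_contra fun hs => hW (detChain_eq_zero_of_not_injective _ hs)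
  have hc : Injective (Prod.fst ∘ e ∘ s) :=
    by_contra fun hc => hW (detChain_crossCoord_eq_zero e hc)
  have hS : ¬ ∀ i, s i ∈ {x | (e x).2 = 0} := fun hS =>
    hπ (exists_eq_crossBase_comp_perm e hc hS)
  rw [transversalMetric_of_not_forall_mem hs hc hS, mul_one]

theorem not_isStrongPseudoMetric_transversalMetric [Fintype X] [DecidableEq X] {k : ℕ}
    (hk : 1 ≤ k) (e : X ≃ Fin (k + 1) × Fin 2) :
    ¬ IsStrongPseudoMetric k
      (transversalMetric (Prod.fst ∘ e) {x | (e x).2 = 0} (2 ^ (k + 1))) := by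
  intro hd
  have hlower := hd.factorial_mul_le_of_bdry_eq_zero (crossBase_injective e)
    (altChain_detChain (crossCoord e)) (bdry_detChain _ (sum_crossCoord e))
  rw [transversalMetric_of_forall_mem (crossBase_injective e)
    (fun i j hij => by simpa [crossBase] using hij) (by simp [crossBase])] at hlower
  have hupper : ∑ s, |unitChain (crossBase e) s - detChain (crossCoord e) s|
        * transversalMetric (Prod.fst ∘ e) {x | (e x).2 = 0} (2 ^ (k + 1)) s
      ≤ (k + 1).factorial * 2 ^ (k + 1) := by
    refine (Finset.sum_le_sum fun s _ => abs_sub_mul_transversalMetric_le e _ s).trans ?_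
    refine (sum_abs_detChain_le _).trans_eq ?_
    simp [sum_abs_crossCoord]
  have hbase : (2 : ℝ) ^ (k + 1) < 1 + (k + 1 - 1 : ℕ) * 2 ^ (k + 1) := by
    have hk' : (1 : ℝ) ≤ k := by exact_mod_cast hk
    rw [Nat.add_sub_cancel]
    nlinarith [pow_pos (two_pos (α := ℝ)) (k + 1)]
  exact (mul_lt_mul_of_pos_left hbase (by positivity)).not_ge (hlower.trans hupper)

end CrossPolytope

/-- for every `k ≥ 3` (arity `k + 3` for `k : ℕ`), there exists a
finite pseudo metric space of that arity that is not a strong pseudo metric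
space. -/
theorem stmt_10 (k : ℕ) :
    ∃ (n : ℕ) (d : (Fin (k + 3) → Fin n) → ℝ),
      IsPseudoMetric (k + 3) d ∧ ¬ IsStrongPseudoMetric (k + 2) d :=
  ⟨(k + 3) * 2, _, isPseudoMetric_transversalMetric (by omega) (by positivity),
    not_isStrongPseudoMetric_transversalMetric (by omega) finProdFinEquiv.symm⟩
end

section
/- Let k, m, m′, n be positive integers with k ≥ 2, let p, q ∈ [1,∞], let ε ≥ 0, and let η < 1/binom(n,k) be a nonnegative real. Suppose there exists a probability measure μ on the space of real m′×m matrices such that for every x ∈ ℝ^m, μ{R : (1−ε)·‖x‖_p ≤ ‖R·x‖_q ≤ (1+ε)·‖x‖_p} ≥ 1 − η. Then for every n-point space (X, d) ∈ C_{k,p}^m there exists a space (X, d′) ∈ C_{k,q}^{m′} such that (1−ε)·d(t) ≤ d′(t) ≤ (1+ε)·d(t) for every t = (x_1,…,x_k) ∈ X^k. -/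
open scoped BigOperators

/-- The `ℓ_p` norm on `ℝ^m` for `p : ℝ≥0∞` with `1 ≤ p`. -/
noncomputable def lpNormE (p : ENNReal) [Fact (1 ≤ p)] {m : ℕ} (x : Fin m → ℝ) :
    ℝ := ‖(WithLp.equiv p (Fin m → ℝ)).symm x‖

/-! The vector `v x = (δf₁ x, …, δfₘ x)` of an injective tuple `x` only changes sign when `x` is
permuted, since coboundaries of alternating chains are alternating. So `d` is determined by at
most `binom(n, k + 2)` vectors, one per `(k + 2)`-subset of `X`, and by the union bound some
matrix `R` distorts all of them by a factor within `1 ± ε`. By linearity of `δ`, the chains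
`∑ⱼ R i j • f j` then realize the required `d'`. -/

open Matrix

theorem Fin.swap_castSucc_succ_succAbove_castSucc {n : ℕ} (c y : Fin (n + 1)) :
    Equiv.swap c.castSucc c.succ (c.castSucc.succAbove y) = c.succ.succAbove y := by
  simp only [Equiv.swap_apply_def, Fin.succAbove, Fin.ext_iff, Fin.lt_def, Fin.val_castSucc,
    Fin.val_succ]
  split_ifs <;> simp_all <;> omega

section Cobdry

variable {X : Type*} {j : ℕ} {f : (Fin (j + 1) → X) → ℝ}

theorem AltChain.cobdry_comp_swap_castSucc_succ (hf : AltChain f) (c : Fin (j + 1))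
    (x : Fin (j + 2) → X) :
    cobdry f (x ∘ Equiv.swap c.castSucc c.succ) = -cobdry f x := by
  set σ := Equiv.swap c.castSucc c.succ
  have hterm : ∀ i : Fin (j + 2), (-1 : ℝ) ^ (i : ℕ) * f ((x ∘ σ) ∘ i.succAbove) =
      -((-1 : ℝ) ^ (σ i : ℕ) * f (x ∘ (σ i).succAbove)) := by
    intro i
    rcases eq_or_ne i c.castSucc with rfl | hic
    · have hx : (x ∘ σ) ∘ c.castSucc.succAbove = x ∘ c.succ.succAbove :=
        funext fun y => congrArg x (Fin.swap_castSucc_succ_succAbove_castSucc c y)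
      simp [σ, hx, pow_succ]
    rcases eq_or_ne i c.succ with rfl | his
    · have hx : (x ∘ σ) ∘ c.succ.succAbove = x ∘ c.castSucc.succAbove :=
        funext fun y => congrArg x <| by
          rw [← Fin.swap_castSucc_succ_succAbove_castSucc c y, Equiv.swap_apply_self]
      simp [σ, hx, pow_succ]
    · obtain ⟨u, hu⟩ := Fin.exists_succAbove_eq hic.symm
      obtain ⟨v, hv⟩ := Fin.exists_succAbove_eq his.symm
      have huv : u ≠ v := by
        rintro rfl
        exact Fin.castSucc_lt_succ.ne (hu.symm.trans hv)
      have hx : (x ∘ σ) ∘ i.succAbove = (x ∘ i.succAbove) ∘ Equiv.swap u v :=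
        funext fun y => by simp [σ, Fin.succAbove_right_injective.map_swap, hu, hv]
      rw [hx, hf, Equiv.Perm.sign_swap huv, Equiv.swap_apply_of_ne_of_ne hic his]
      push_cast
      ring
  calc cobdry f (x ∘ σ) = ∑ i, -((-1 : ℝ) ^ (σ i : ℕ) * f (x ∘ (σ i).succAbove)) :=
        Finset.sum_congr rfl fun i _ => hterm i
    _ = -cobdry f x := by
        rw [Finset.sum_neg_distrib,
          Equiv.sum_comp σ fun i => (-1 : ℝ) ^ (i : ℕ) * f (x ∘ i.succAbove)]
        rfl

theorem AltChain.cobdry (hf : AltChain f) : AltChain (cobdry f) := by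
  intro π
  have hπ : π ∈ Submonoid.closure
      (Set.range fun c : Fin (j + 1) => Equiv.swap c.castSucc c.succ) := by
    rw [Equiv.Perm.mclosure_swap_castSucc_succ]
    trivial
  induction hπ using Submonoid.closure_induction with
  | mem σ hσ =>
    obtain ⟨c, rfl⟩ := hσ
    intro x
    rw [hf.cobdry_comp_swap_castSucc_succ, Equiv.Perm.sign_swap Fin.castSucc_lt_succ.ne]
    simp
  | one => simp
  | mul σ τ _ _ hσ hτ =>
    intro x
    rw [Equiv.Perm.coe_mul, ← Function.comp_assoc, hτ, hσ, Equiv.Perm.sign_mul]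
    push_cast
    ring

theorem cobdry_sum_mul {ι : Type*} [Fintype ι] (a : ι → ℝ) (g : ι → (Fin (j + 1) → X) → ℝ)
    (x : Fin (j + 2) → X) :
    cobdry (fun y => ∑ l, a l * g l y) x = ∑ l, a l * cobdry (g l) x := by
  simp only [cobdry, Finset.mul_sum]
  rw [Finset.sum_comm]
  exact Finset.sum_congr rfl fun _ _ => Finset.sum_congr rfl fun _ _ => by ring

theorem AltChain.sum_mul {ι : Type*} [Fintype ι] {g : ι → (Fin j → X) → ℝ}
    (hg : ∀ l, AltChain (g l)) (a : ι → ℝ) : AltChain (fun y => ∑ l, a l * g l y) := by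
  intro π y
  simp only [hg _ π y, Finset.mul_sum]
  exact Finset.sum_congr rfl fun _ _ => by ring

open Classical in
theorem isCoboundaryMetric_mulVec {k m m' : ℕ} {g : Fin m → (Fin (k + 1) → X) → ℝ}
    (hg : ∀ l, AltChain (g l)) (ν : (Fin m' → ℝ) → ℝ) (R : Matrix (Fin m') (Fin m) ℝ) :
    IsCoboundaryMetric k m' ν fun x =>
      if Function.Injective x then ν (R *ᵥ fun l => cobdry (g l) x) else 0 := by
  refine ⟨fun i y => ∑ l, R i l * g l y, fun i => AltChain.sum_mul hg (R i), ?_, ?_⟩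
  · intro x hx
    dsimp only
    rw [if_pos hx]
    simp only [cobdry_sum_mul]
    rfl
  · intro x hx
    exact if_neg hx

end Cobdry

theorem lpNormE_smul (p : ENNReal) [Fact (1 ≤ p)] {m : ℕ} (c : ℝ) (x : Fin m → ℝ) :
    lpNormE p (c • x) = |c| * lpNormE p x := by
  rw [lpNormE, WithLp.equiv_symm_apply, WithLp.toLp_smul, norm_smul, Real.norm_eq_abs]
  rfl

theorem continuous_lpNormE (p : ENNReal) [Fact (1 ≤ p)] {m : ℕ} :
    Continuous (lpNormE p (m := m)) :=
  (PiLp.continuous_toLp p fun _ => ℝ).norm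

section NearIsometry

variable (p q : ENNReal) [Fact (1 ≤ p)] [Fact (1 ≤ q)] {m m' : ℕ} (ε : ℝ)

def nearIsometrySet (x : Fin m → ℝ) : Set (Fin m' → Fin m → ℝ) :=
  {R | (1 - ε) * lpNormE p x ≤ lpNormE q (of R *ᵥ x) ∧
    lpNormE q (of R *ᵥ x) ≤ (1 + ε) * lpNormE p x}

theorem measurableSet_nearIsometrySet (x : Fin m → ℝ) :
    MeasurableSet (nearIsometrySet p q ε x : Set (Fin m' → Fin m → ℝ)) := by
  have hc : Continuous fun R : Fin m' → Fin m → ℝ => lpNormE q (of R *ᵥ x) :=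
    (continuous_lpNormE q).comp (Continuous.matrix_mulVec continuous_id continuous_const)
  exact hc.measurable measurableSet_Icc

theorem nearIsometrySet_smul {c : ℝ} (hc : c ≠ 0) (x : Fin m → ℝ) :
    (nearIsometrySet p q ε (c • x) : Set (Fin m' → Fin m → ℝ)) =
      nearIsometrySet p q ε x := by
  ext R
  have hc' : 0 < |c| := abs_pos.mpr hc
  have hR : of R *ᵥ (c • x) = c • of R *ᵥ x := Matrix.mulVec_smul _ c x
  simp only [nearIsometrySet, Set.mem_ofPred_eq, hR, lpNormE_smul, mul_left_comm _ |c|,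
    mul_le_mul_iff_of_pos_left hc']

end NearIsometry

open MeasureTheory in
theorem exists_forall_mem_of_card_mul_lt_one {Ω ι : Type*} [MeasurableSpace Ω] (μ : Measure Ω)
    [IsProbabilityMeasure μ] {T : Finset ι} {A : ι → Set Ω} (hA : ∀ i ∈ T, MeasurableSet (A i))
    {η : ℝ} (hμA : ∀ i ∈ T, ENNReal.ofReal (1 - η) ≤ μ (A i)) (hT : T.card * η < 1) :
    ∃ ω, ∀ i ∈ T, ω ∈ A i := by
  have hcompl : ∀ i ∈ T, μ (A i)ᶜ ≤ ENNReal.ofReal η := fun i hi => by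
    rw [prob_compl_eq_one_sub (hA i hi), tsub_le_iff_right]
    calc 1 = ENNReal.ofReal (η + (1 - η)) := by simp
      _ ≤ ENNReal.ofReal η + ENNReal.ofReal (1 - η) := ENNReal.ofReal_add_le
      _ ≤ ENNReal.ofReal η + μ (A i) := by gcongr; exact hμA i hi
  have hunion : μ (⋃ i ∈ T, (A i)ᶜ) < 1 :=
    calc μ (⋃ i ∈ T, (A i)ᶜ) ≤ ∑ i ∈ T, μ (A i)ᶜ := measure_biUnion_finset_le T _
      _ ≤ T.card • ENNReal.ofReal η := Finset.sum_le_card_nsmul T _ _ hcompl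
      _ = ENNReal.ofReal (T.card * η) := by
        rw [nsmul_eq_mul, ENNReal.ofReal_mul (Nat.cast_nonneg _), ENNReal.ofReal_natCast]
      _ < 1 := ENNReal.ofReal_lt_one.mpr hT
  obtain ⟨ω, hω⟩ := (Set.ne_univ_iff_exists_notMem (⋃ i ∈ T, (A i)ᶜ)).mp fun h => by
    simp [h] at hunion
  exact ⟨ω, by simpa using hω⟩

theorem exists_perm_eq_comp_of_range_eq {X : Type*} {K : ℕ} {x t : Fin K → X}
    (hx : Function.Injective x) (ht : Function.Injective t)
    (h : Set.range x = Set.range t) : ∃ π : Equiv.Perm (Fin K), x = t ∘ π := by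
  refine ⟨(Equiv.ofInjective x hx).trans ((Equiv.setCongr h).trans
    (Equiv.ofInjective t ht).symm), funext fun i => ?_⟩
  simp only [Function.comp_apply, Equiv.trans_apply, Equiv.apply_ofInjective_symm ht]
  rfl

theorem exists_finset_card_le_choose_forall_eq_comp_perm (X : Type*) [Fintype X]
    [DecidableEq X] (K : ℕ) :
    ∃ T : Finset (Fin K → X), T.card ≤ (Fintype.card X).choose K ∧
      ∀ x, Function.Injective x → ∃ t ∈ T, ∃ π : Equiv.Perm (Fin K), x = t ∘ π := by
  rcases isEmpty_or_nonempty (Fin K → X) with hempty | hnonempty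
  · exact ⟨∅, by simp, fun x => isEmptyElim x⟩
  let img : (Fin K → X) → Finset X := fun x => Finset.univ.image x
  have card_img : ∀ x, Function.Injective x → (img x).card = K := fun x hx => by
    simp [img, Finset.card_image_of_injective _ hx]
  refine ⟨(Finset.powersetCard K Finset.univ).image (Function.invFun img), ?_, ?_⟩
  · calc _ ≤ (Finset.powersetCard K (Finset.univ : Finset X)).card := Finset.card_image_le
      _ = _ := by rw [Finset.card_powersetCard, Finset.card_univ]
  · intro x hx
    set t := Function.invFun img (img x)
    have ht : img t = img x := Function.invFun_eq ⟨x, rfl⟩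
    have ht_inj : Function.Injective t := by
      have hcard : (Finset.univ.image t).card = (Finset.univ : Finset (Fin K)).card := by
        rw [show Finset.univ.image t = img t from rfl, ht, card_img x hx, Finset.card_fin]
      simpa using Finset.card_image_iff.mp hcard
    have hrange : Set.range x = Set.range t := by
      simpa [img, Set.image_univ] using congrArg (fun s : Finset X => (s : Set X)) ht.symm
    obtain ⟨π, hπ⟩ := exists_perm_eq_comp_of_range_eq hx ht_inj hrange
    exact ⟨t, Finset.mem_image_of_mem _ (Finset.mem_powersetCard.mpr
      ⟨Finset.subset_univ _, card_img x hx⟩), π, hπ⟩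

theorem stmt_11_general (k m m' n : ℕ) (p q : ENNReal) [Fact (1 ≤ p)] [Fact (1 ≤ q)]
    (ε η : ℝ) (hηn : η < 1 / (n.choose (k + 2) : ℝ))
    (μ : MeasureTheory.Measure (Fin m' → Fin m → ℝ))
    [MeasureTheory.IsProbabilityMeasure μ]
    (hμ : ∀ x : Fin m → ℝ,
      ENNReal.ofReal (1 - η) ≤
        μ {R | (1 - ε) * lpNormE p x ≤ lpNormE q (fun i => ∑ j, R i j * x j) ∧
               lpNormE q (fun i => ∑ j, R i j * x j) ≤ (1 + ε) * lpNormE p x}) :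
    ∀ (X : Type) [Fintype X] [DecidableEq X], Fintype.card X = n →
      ∀ d : (Fin (k + 2) → X) → ℝ, IsCoboundaryMetric k m (lpNormE p) d →
        ∃ d' : (Fin (k + 2) → X) → ℝ,
          IsCoboundaryMetric k m' (lpNormE q) d' ∧
            ∀ t : Fin (k + 2) → X, (1 - ε) * d t ≤ d' t ∧ d' t ≤ (1 + ε) * d t := by
  intro X _ _ hcard d ⟨f, hf, hd_inj, hd_not_inj⟩
  obtain ⟨T, hT_card, hT⟩ := exists_finset_card_le_choose_forall_eq_comp_perm X (k + 2)
  rw [hcard] at hT_card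
  have hTη : (T.card : ℝ) * η < 1 := by
    rcases le_or_gt η 0 with hη | hη
    · nlinarith [T.card.cast_nonneg (α := ℝ)]
    · have hC : (0 : ℝ) < n.choose (k + 2) := one_div_pos.mp (hη.trans hηn)
      calc (T.card : ℝ) * η ≤ n.choose (k + 2) * η := by gcongr
        _ < 1 := (lt_div_iff₀' hC).mp hηn
  let v : (Fin (k + 2) → X) → Fin m → ℝ := fun x l => cobdry (f l) x
  obtain ⟨R, hR⟩ := exists_forall_mem_of_card_mul_lt_one μ
    (A := fun t => nearIsometrySet p q ε (v t)) (fun _ _ => measurableSet_nearIsometrySet ..)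
    (fun t _ => hμ (v t)) hTη
  have hR_inj : ∀ x, Function.Injective x → R ∈ nearIsometrySet p q ε (v x) := by
    intro x hx
    obtain ⟨t, ht, π, rfl⟩ := hT x hx
    have hv : v (t ∘ π) = ((Equiv.Perm.sign π : ℤ) : ℝ) • v t :=
      funext fun l => (hf l).cobdry π t
    rw [hv, nearIsometrySet_smul _ _ _ (by simp)]
    exact hR t ht
  refine ⟨_, isCoboundaryMetric_mulVec hf (lpNormE q) (Matrix.of R), fun t => ?_⟩
  by_cases ht : Function.Injective t
  · rw [if_pos ht, hd_inj t ht]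
    exact hR_inj t ht
  · simp [ht, hd_not_inj t ht]

/-- if there is a probability distribution over `m' × m` matrices
that, for each fixed vector, preserves the (`ℓ_p` to `ℓ_q`) norm to within a
`1 ± ε` factor with probability `≥ 1 − η` where `η < 1/binom(n, k)`,
then every `n`-point coboundary metric of arity `k + 2` in `C_{k,p}^m` is
`(1 ± ε)`-approximated by one in `C_{k,q}^{m'}`. -/
theorem stmt_11 (k m m' n : ℕ) (hk2 : 1 ≤ k + 2) (hm : 1 ≤ m) (hm' : 1 ≤ m')
    (hn : 1 ≤ n) (p q : ENNReal) [Fact (1 ≤ p)] [Fact (1 ≤ q)]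
    (ε η : ℝ) (hε : 0 ≤ ε) (hη : 0 ≤ η) (hηn : η < 1 / (n.choose (k + 2) : ℝ))
    (μ : MeasureTheory.Measure (Fin m' → Fin m → ℝ))
    [MeasureTheory.IsProbabilityMeasure μ]
    (hμ : ∀ x : Fin m → ℝ,
      ENNReal.ofReal (1 - η) ≤
        μ {R | (1 - ε) * lpNormE p x ≤ lpNormE q (fun i => ∑ j, R i j * x j) ∧
               lpNormE q (fun i => ∑ j, R i j * x j) ≤ (1 + ε) * lpNormE p x}) :
    ∀ (X : Type) [Fintype X] [DecidableEq X], Fintype.card X = n →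
      ∀ d : (Fin (k + 2) → X) → ℝ, IsCoboundaryMetric k m (lpNormE p) d →
        ∃ d' : (Fin (k + 2) → X) → ℝ,
          IsCoboundaryMetric k m' (lpNormE q) d' ∧
            ∀ t : Fin (k + 2) → X, (1 - ε) * d t ≤ d' t ∧ d' t ≤ (1 + ε) * d t :=
  stmt_11_general k m m' n p q ε η hηn μ hμ
end

section
/- For every integer k ≥ 2, every (k−1)-dimensional volume k-metric is a 1-dimensional coboundary k-metric with respect to the ℓ_2 norm: if (X, d) ∈ V_k^{k−1}, then (X, d) ∈ C_{k,2}^1; i.e., there exists a (k−2)-chain f on X such that |(δf)(x_1,…,x_k)| = d(x_1,…,x_k) for all distinct x_1,…,x_k ∈ X. -/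
open scoped BigOperators

/-- every `(k+1)`-dimensional volume metric of arity `k + 2`
(i.e. `V_k^{k-1}` in the paper's indexing) is a 1-dimensional coboundary metric
with respect to the `ℓ_2` norm (which in one dimension is the absolute value). -/
theorem stmt_14 (k : ℕ) {X : Type*} [Fintype X]
    (g : X → (Fin (k + 1) → ℝ)) (d : (Fin (k + 2) → X) → ℝ)
    (hd : ∀ x : Fin (k + 2) → X,
      d x = simplexVolume (m := k + 1) (K := k + 1) fun i => g (x i)) :
    IsCoboundaryMetric k 1 (fun v => |v 0|) d := by
  classical
  set c : ℝ := (((k + 1).factorial : ℝ))⁻¹ with hc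
  have hcpos : (0 : ℝ) < ((k + 1).factorial : ℝ) := by positivity
  set f : (Fin (k + 1) → X) → ℝ :=
    fun y => c * (Matrix.of fun i j : Fin (k + 1) => g (y i) j).det with hf
  -- the bordered matrix
  set M : (Fin (k + 2) → X) → Matrix (Fin (k + 2)) (Fin (k + 2)) ℝ :=
    fun x => Matrix.of fun i => Fin.cons (1 : ℝ) (g (x i)) with hMdef
  -- the difference matrix
  set Nm : (Fin (k + 2) → X) → Matrix (Fin (k + 1)) (Fin (k + 1)) ℝ :=
    fun x => Matrix.of fun i j => g (x i.succ) j - g (x 0) j with hNdef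
  -- cobdry f x = c * det (M x)
  have hcob : ∀ x : Fin (k + 2) → X, cobdry f x = c * (M x).det := by
    intro x
    rw [Matrix.det_succ_column_zero]
    rw [Finset.mul_sum]
    unfold cobdry
    refine Finset.sum_congr rfl fun i _ => ?_
    have h1 : (M x) i 0 = 1 := rfl
    have h2 : ((M x).submatrix i.succAbove Fin.succ) =
        Matrix.of fun a b : Fin (k + 1) => g ((x ∘ i.succAbove) a) b := by
      ext a b
      rfl
    rw [h1, h2]
    simp [hf]
    ring
  -- det (M x) = det (Nm x)
  have hdet : ∀ x : Fin (k + 2) → X, (M x).det = (Nm x).det := by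
    intro x
    -- row-reduce M
    set M' : Matrix (Fin (k + 2)) (Fin (k + 2)) ℝ :=
      Matrix.of fun i j => (M x) i j + (if i = 0 then 0 else -1) * (M x) 0 j with hM'
    have e1 : M'.det = (M x).det :=
      Matrix.det_eq_of_forall_row_eq_smul_add_const
        (fun i => if i = 0 then 0 else -1) 0 (by simp) (fun i j => rfl)
    rw [← e1, Matrix.det_succ_column_zero]
    have hcol : ∀ i : Fin (k + 2), M' i 0 = if i = 0 then 1 else 0 := by
      intro i
      by_cases h : i = 0 <;> simp [hM', h, hMdef]
    rw [Fin.sum_univ_succ]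
    have hz : ∀ i : Fin (k + 1),
        (-1 : ℝ) ^ ((i.succ : Fin (k+2)) : ℕ) * M' i.succ 0 *
          (M'.submatrix i.succ.succAbove Fin.succ).det = 0 := by
      intro i
      rw [hcol]
      simp [Fin.succ_ne_zero i]
    rw [Finset.sum_eq_zero fun i _ => hz i]
    rw [hcol]
    have hsub : M'.submatrix (Fin.succAbove 0) Fin.succ = Nm x := by
      ext a b
      simp [hM', hMdef, hNdef, Fin.succAbove, Fin.succ_ne_zero]
      ring
    rw [hsub]
    simp
  -- d x = c * |det (Nm x)|
  have hdx : ∀ x : Fin (k + 2) → X, d x = c * |(Nm x).det| := by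
    intro x
    rw [hd x]
    unfold simplexVolume
    have hgram : (Matrix.of fun i j : Fin (k + 1) =>
        ∑ l : Fin (k + 1), (g (x i.succ) l - g (x 0) l) * (g (x j.succ) l - g (x 0) l)) =
        (Nm x) * (Nm x).transpose := by
      ext i j
      simp [Matrix.mul_apply, hNdef]
    rw [hgram, Matrix.det_mul, Matrix.det_transpose, ← sq, Real.sqrt_sq_eq_abs]
    rw [hc, one_div]
  refine ⟨fun _ => f, ?_, ?_, ?_⟩
  · intro _ π y
    have : (Matrix.of fun i j : Fin (k + 1) => g ((y ∘ π) i) j) =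
        (Matrix.of fun i j : Fin (k + 1) => g (y i) j).submatrix π id := by
      ext i j; rfl
    simp only [hf, this, Matrix.det_permute]
    ring
  · intro x _
    rw [hdx x]
    show _ = |cobdry f x|
    rw [hcob x, hdet x, abs_mul, abs_of_pos (by positivity : (0:ℝ) < c)]
  · intro x hx
    rw [Function.not_injective_iff] at hx
    obtain ⟨a, b, hab, hne⟩ := hx
    have hMab : (M x) a = (M x) b := by
      ext j
      simp [hMdef, hab]
    have : (M x).det = 0 := Matrix.det_zero_of_row_eq hne hMab
    rw [hdx x, ← hdet x, this]
    simp
end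

section
/- Let X = {x_1, x_2, x_3, x_4} be a 4-element set and let d : X^3 → ℝ be the symmetric function with d = 0 on tuples that are not all distinct, d(x_1,x_2,x_3) = 0, and d(x_σ(1),x_σ(2),x_σ(3)) equal to 1 on every ordering of each of the triples {x_1,x_2,x_4}, {x_1,x_3,x_4}, {x_2,x_3,x_4}. Then (X, d) ∈ C_{3,2}^2 (it is a 2-dimensional coboundary 3-pseudometric with respect to the Euclidean norm), but for every integer m ≥ 1, (X, d) ∉ V_3^m; i.e., there is no map g : X → ℝ^m realizing d as triangle areas. -/
open scoped BigOperators

open Classical in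
/-- The 3-pseudometric on `{x₁, x₂, x₃, x₄} = Fin 4` with `d(x₁,x₂,x₃) = 0`,
value `1` on (each ordering of) the other three distinct triples, and `0` on
non-distinct triples. -/
noncomputable def dFour : (Fin 3 → Fin 4) → ℝ := fun x =>
  if Function.Injective x then
    (if (Finset.image x Finset.univ : Finset (Fin 4)) = ({0, 1, 2} : Finset (Fin 4))
      then 0 else 1)
  else 0

/-!
For the coboundary part, put `x₁, x₂, x₃` at the vertices of a unit equilateral triangle in `ℝ²`
and take the cone over the apex `x₄`: the 1-chains `f(a, b) = [b = x₄] c(a) - [a = x₄] c(b)`.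
Their coboundary at a triangle through `x₄` is the edge vector of `c` between the two other
points, of length `1`, and it vanishes at `{x₁, x₂, x₃}`.

For the volume part, area `0` puts `g x₂ - g x₁ = u` and `g x₃ - g x₁ = t u` on a line
(or `u = 0`). The triangles over the bases `[x₁, x₂]`, `[x₁, x₃]`, `[x₂, x₃]` with apex `g x₄`
have squared areas `1`, `t²`, `(t - 1)²` times a common value, so they cannot all equal `1`.
-/
section Cone

variable {X : Type*} [DecidableEq X] {m : ℕ}

def coneChain (p : X) (c : X → Fin m → ℝ) (i : Fin m) (s : Fin 2 → X) : ℝ :=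
  (if s 1 = p then c (s 0) i else 0) - (if s 0 = p then c (s 1) i else 0)

lemma coneChain_altChain (p : X) (c : X → Fin m → ℝ) (i : Fin m) :
    AltChain (coneChain p c i) := by
  intro π x
  obtain rfl | rfl : π = 1 ∨ π = Equiv.swap 0 1 := by revert π; decide
  · simp
  · simp [coneChain]

lemma cobdry_coneChain (p : X) (c : X → Fin m → ℝ) (i : Fin m) (x : Fin 3 → X) :
    cobdry (coneChain p c i) x =
      (if x 0 = p then c (x 2) i - c (x 1) i else 0) +
        (if x 1 = p then c (x 0) i - c (x 2) i else 0) +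
          (if x 2 = p then c (x 1) i - c (x 0) i else 0) := by
  simp only [cobdry, coneChain, Fin.sum_univ_succ, Fin.sum_univ_zero]
  by_cases h0 : x 0 = p <;> by_cases h1 : x 1 = p <;> by_cases h2 : x 2 = p <;>
    simp [h0, h1, h2, Fin.succAbove] <;> ring

lemma cobdry_coneChain_of_apex {p : X} (c : X → Fin m → ℝ) (i : Fin m) {x : Fin 3 → X}
    (hx : Function.Injective x) {k : Fin 3} (hk : x k = p) :
    cobdry (coneChain p c i) x = c (x (k + 2)) i - c (x (k + 1)) i := by
  subst hk
  rw [cobdry_coneChain]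
  fin_cases k <;> simp [hx.eq_iff]

lemma cobdry_coneChain_of_forall_ne {p : X} (c : X → Fin m → ℝ) (i : Fin m) {x : Fin 3 → X}
    (hx : ∀ k, x k ≠ p) : cobdry (coneChain p c i) x = 0 := by
  simp [cobdry_coneChain, hx]

end Cone

section Gram

variable {m : ℕ}

def gramDet (u v : Fin m → ℝ) : ℝ := (u ⬝ᵥ u) * (v ⬝ᵥ v) - (u ⬝ᵥ v) ^ 2

lemma simplexVolume_eq_sqrt_gramDet (y : Fin 3 → Fin m → ℝ) :
    simplexVolume y = 1 / 2 * √(gramDet (y 1 - y 0) (y 2 - y 0)) := by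
  simp only [simplexVolume, gramDet, dotProduct, Matrix.det_fin_two, Matrix.of_apply]
  simp [sq, mul_comm]

lemma gramDet_zero_left (v : Fin m → ℝ) : gramDet 0 v = 0 := by
  simp [gramDet]

lemma gramDet_smul_left (t : ℝ) (u v : Fin m → ℝ) :
    gramDet (t • u) v = t ^ 2 * gramDet u v := by
  simp only [gramDet, smul_dotProduct, dotProduct_smul, smul_eq_mul]
  ring

lemma gramDet_sub_right_self (u v : Fin m → ℝ) : gramDet u (v - u) = gramDet u v := by
  simp only [gramDet, dotProduct_sub, sub_dotProduct, dotProduct_comm v u]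
  ring

lemma eq_zero_or_exists_eq_smul_of_gramDet_nonpos {u v : Fin m → ℝ} (h : gramDet u v ≤ 0) :
    u = 0 ∨ ∃ t : ℝ, v = t • u := by
  refine or_iff_not_imp_left.mpr fun hu => ⟨(u ⬝ᵥ v) / (u ⬝ᵥ u), ?_⟩
  have huu : 0 < u ⬝ᵥ u :=
    (Fintype.sum_nonneg fun _ => mul_self_nonneg _).lt_of_ne' (dotProduct_self_eq_zero.not.mpr hu)
  set r := v - ((u ⬝ᵥ v) / (u ⬝ᵥ u)) • u
  have hr : (u ⬝ᵥ u) * (r ⬝ᵥ r) = gramDet u v := by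
    simp only [r, gramDet, dotProduct_sub, sub_dotProduct, dotProduct_smul, smul_dotProduct,
      smul_eq_mul, dotProduct_comm v u]
    field_simp
    ring
  have hr0 : r ⬝ᵥ r = 0 := le_antisymm (nonpos_of_mul_nonpos_right (hr ▸ h) huu)
    (Fintype.sum_nonneg fun _ => mul_self_nonneg _)
  exact sub_eq_zero.mp (dotProduct_self_eq_zero.mp hr0)

lemma gramDet_eq_zero_of_collinear {u v w : Fin m → ℝ} (huv : gramDet u v ≤ 0)
    (hv : gramDet v w = gramDet u w) (hvu : gramDet (v - u) (w - u) = gramDet u w) :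
    gramDet u w = 0 := by
  obtain rfl | ⟨t, rfl⟩ := eq_zero_or_exists_eq_smul_of_gramDet_nonpos huv
  · exact gramDet_zero_left w
  · have h1 : gramDet (t • u - u) (w - u) = (t - 1) ^ 2 * gramDet u w := by
      rw [show t • u - u = (t - 1) • u by rw [sub_smul, one_smul], gramDet_smul_left,
        gramDet_sub_right_self]
    rw [gramDet_smul_left] at hv
    rw [h1] at hvu
    nlinarith [sq_nonneg t]

noncomputable def unitTriangle : Fin 4 → Fin 2 → ℝ :=
  ![![0, 0], ![1, 0], ![1 / 2, √3 / 2], 0]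

lemma l2Norm_unitTriangle_sub {a b : Fin 4} (hab : a ≠ b) (ha : a ≠ 3) (hb : b ≠ 3) :
    l2Norm (unitTriangle a - unitTriangle b) = 1 := by
  rw [l2Norm, Real.sqrt_eq_one]
  fin_cases a <;> fin_cases b <;> simp_all [unitTriangle, div_pow] <;> norm_num

lemma dFour_of_injective {x : Fin 3 → Fin 4} (hx : Function.Injective x) :
    dFour x = if ∃ k, x k = 3 then 1 else 0 := by
  have key : ∀ x : Fin 3 → Fin 4, Function.Injective x →
      (Finset.image x Finset.univ = {0, 1, 2} ↔ ¬ ∃ k, x k = 3) := by decide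
  simp only [dFour, if_pos hx, key x hx, ite_not]

lemma dFour_eq_l2Norm_cobdry_coneChain {x : Fin 3 → Fin 4} (hx : Function.Injective x) :
    dFour x = l2Norm fun i => cobdry (coneChain 3 unitTriangle i) x := by
  rw [dFour_of_injective hx]
  split_ifs with h
  · obtain ⟨k, hk⟩ := h
    have hne : ∀ j, j ≠ k → x j ≠ 3 := fun j hj => hk ▸ hx.ne hj
    rw [funext fun i => cobdry_coneChain_of_apex unitTriangle i hx hk]
    exact (l2Norm_unitTriangle_sub (hx.ne (by simp))
      (hne _ (by simp)) (hne _ (by simp))).symm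
  · simp only [not_exists] at h
    simp [cobdry_coneChain_of_forall_ne _ _ h, l2Norm]

theorem isCoboundaryMetric_dFour : IsCoboundaryMetric 1 2 l2Norm dFour :=
  ⟨coneChain 3 unitTriangle, coneChain_altChain 3 unitTriangle,
    fun _ => dFour_eq_l2Norm_cobdry_coneChain, fun x hx => by rw [dFour, if_neg hx]⟩

theorem not_forall_dFour_eq_simplexVolume {m : ℕ} (g : Fin 4 → Fin m → ℝ) :
    ¬ ∀ x : Fin 3 → Fin 4, dFour x = simplexVolume fun i => g (x i) := by
  intro hg
  have area (a b c : Fin 4) :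
      dFour ![a, b, c] = 1 / 2 * √(gramDet (g b - g a) (g c - g a)) := by
    rw [hg, simplexVolume_eq_sqrt_gramDet]
    rfl
  have area_one (a b c : Fin 4) (hinj : Function.Injective ![a, b, c])
      (h3 : ∃ k, ![a, b, c] k = 3) : gramDet (g b - g a) (g c - g a) = 4 := by
    have h := area a b c
    rw [dFour_of_injective hinj, if_pos h3] at h
    have h2 : √(gramDet (g b - g a) (g c - g a)) = 2 := by linarith
    linarith [(Real.sqrt_eq_iff_mul_self_eq_of_pos two_pos).mp h2]
  have h012 : gramDet (g 1 - g 0) (g 2 - g 0) ≤ 0 := by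
    refine Real.sqrt_eq_zero'.mp ?_
    have h := area 0 1 2
    rw [dFour_of_injective (by decide), if_neg (by decide)] at h
    linarith
  have h013 := area_one 0 1 3 (by decide) ⟨2, rfl⟩
  have h023 := area_one 0 2 3 (by decide) ⟨2, rfl⟩
  have h123 := area_one 1 2 3 (by decide) ⟨2, rfl⟩
  rw [← sub_sub_sub_cancel_right (g 2) (g 1) (g 0),
    ← sub_sub_sub_cancel_right (g 3) (g 1) (g 0)] at h123
  exact four_ne_zero <| h013.symm.trans <|
    gramDet_eq_zero_of_collinear h012 (h023.trans h013.symm) (h123.trans h013.symm)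

/-- `(Fin 4, dFour)` is in `C_{3,2}^2` (a 2-dimensional coboundary
3-pseudometric w.r.t. the Euclidean norm), but it is not an `m`-dimensional
volume 3-pseudometric for any `m ≥ 1`. -/
theorem stmt_16 :
    IsCoboundaryMetric 1 2 l2Norm dFour ∧
      ∀ m : ℕ, 1 ≤ m →
        ¬ ∃ g : Fin 4 → (Fin m → ℝ),
            ∀ x : Fin 3 → Fin 4,
              dFour x = simplexVolume (m := m) (K := 2) fun i => g (x i) :=
  ⟨isCoboundaryMetric_dFour, fun _ _ ⟨g, hg⟩ => not_forall_dFour_eq_simplexVolume g hg⟩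
end Gram
end
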